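/- arXiv:0912.3376 — 6 statements merged into one kernel-verified Lean document; each statement's English description precedes it below -/
import Mathlib

section
/- Let T be a real symmetric tridiagonal n×n matrix and s ∈ ℝ such that T − sI is almost invertible, with Q⋆R⋆ factorization T − sI = Q⋆R⋆, and set F_s(T) := Q⋆ᵀ T Q⋆. Then F_s(T) is symmetric tridiagonal, the characteristic polynomial of F_s(T) equals that of T, for every i = 1,…,n−1 one has (F_s(T))_{i+1,i} · (R⋆)_{i,i} = (R⋆)_{i+1,i+1} · T_{i+1,i}, and for every i = 1,…,n−2 the entries (F_s(T))_{i+1,i} and T_{i+1,i} have the same sign (both positive, both negative, or both zero). -/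
open Matrix Filter Topology

attribute [local instance] Matrix.normedAddCommGroup Matrix.normedSpace

noncomputable section

attribute [local instance] Classical.propDecidable

/-- The first `n+1` columns of the `(n+2)×(n+2)` matrix `M` are linearly independent,
i.e. `M` is *almost invertible*. -/
def AlmostInv {n : ℕ} (M : Matrix (Fin (n+2)) (Fin (n+2)) ℝ) : Prop :=
  LinearIndependent ℝ (fun j : Fin (n+1) => fun i => M i j.castSucc)

/-- `M = Q⋆ R⋆` with `Q⋆` orthogonal of determinant one and `R⋆` upper triangular
with positive diagonal except possibly at the last entry. -/
def IsQsRs {n : ℕ} (M Q R : Matrix (Fin (n+2)) (Fin (n+2)) ℝ) : Prop :=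
  Qᵀ * Q = 1 ∧ Q.det = 1 ∧ (∀ i j : Fin (n+2), j < i → R i j = 0) ∧
    (∀ i : Fin (n+1), 0 < R i.castSucc i.castSucc) ∧ M = Q * R

/-- `M = Q R` with `Q` orthogonal and `R` upper triangular with positive diagonal. -/
def IsQR {n : ℕ} (M Q R : Matrix (Fin (n+2)) (Fin (n+2)) ℝ) : Prop :=
  Qᵀ * Q = 1 ∧ (∀ i j : Fin (n+2), j < i → R i j = 0) ∧
    (∀ i : Fin (n+2), 0 < R i i) ∧ M = Q * R

/-- `E_n = diag(1, …, 1, -1)`. -/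
def En (n : ℕ) : Matrix (Fin (n+2)) (Fin (n+2)) ℝ :=
  Matrix.diagonal (fun i => if i = Fin.last (n+1) then -1 else 1)

/-- The signed shifted QR step `F_s(T) = Q⋆ᵀ T Q⋆` where `T - s I = Q⋆ R⋆`. -/
def Fs {n : ℕ} (s : ℝ) (T : Matrix (Fin (n+2)) (Fin (n+2)) ℝ) :
    Matrix (Fin (n+2)) (Fin (n+2)) ℝ :=
  if h : ∃ Q R, IsQsRs (T - s • 1) Q R then (h.choose)ᵀ * T * h.choose else 0

/-- The (plain) shifted QR step `Φ(T, s) = Qᵀ T Q` where `T - s I = Q R`. -/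
def Phi {n : ℕ} (T : Matrix (Fin (n+2)) (Fin (n+2)) ℝ) (s : ℝ) :
    Matrix (Fin (n+2)) (Fin (n+2)) ℝ :=
  if h : ∃ Q R, IsQR (T - s • 1) Q R then (h.choose)ᵀ * T * h.choose else 0

/-- `T` is symmetric and tridiagonal. -/
def SymTridiag {n : ℕ} (T : Matrix (Fin (n+2)) (Fin (n+2)) ℝ) : Prop :=
  Tᵀ = T ∧ ∀ i j : Fin (n+2), (i.val + 1 < j.val ∨ j.val + 1 < i.val) → T i j = 0

/-- `b(T)`, the lowest subdiagonal entry `T_{n, n-1}` (1-based). -/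
def lowb {n : ℕ} (T : Matrix (Fin (n+2)) (Fin (n+2)) ℝ) : ℝ :=
  T (Fin.last (n+1)) ⟨n, by omega⟩

/-- `T` is unreduced: all subdiagonal entries are nonzero. -/
def Unreduced {n : ℕ} (T : Matrix (Fin (n+2)) (Fin (n+2)) ℝ) : Prop :=
  ∀ i : Fin (n+1), T i.succ i.castSucc ≠ 0

/-- `𝒯_Λ`: real symmetric tridiagonal matrices with the same characteristic polynomial
as `Λ = diagonal lam`. -/
def TSet {n : ℕ} (lam : Fin (n+2) → ℝ) : Set (Matrix (Fin (n+2)) (Fin (n+2)) ℝ) :=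
  {T | SymTridiag T ∧ T.charpoly = (Matrix.diagonal lam).charpoly}

/-- The deflation neighborhood `D^i_{Λ,ε}`. -/
def Dset {n : ℕ} (lam : Fin (n+2) → ℝ) (ε : ℝ) (i : Fin (n+2)) :
    Set (Matrix (Fin (n+2)) (Fin (n+2)) ℝ) :=
  {T ∈ TSet lam | |lowb T| ≤ ε ∧
    |T (Fin.last (n+1)) (Fin.last (n+1)) - lam i| ≤ Real.sqrt 2 * ε}

/-- The deflation set `D^i_{Λ,0}`. -/
def D0 {n : ℕ} (lam : Fin (n+2) → ℝ) (i : Fin (n+2)) :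
    Set (Matrix (Fin (n+2)) (Fin (n+2)) ℝ) :=
  {T ∈ TSet lam | lowb T = 0 ∧ T (Fin.last (n+1)) (Fin.last (n+1)) = lam i}

/-- The deflation domain `D^i_Λ`: matrices `T ∈ 𝒯_Λ` with `T - λ_i I` almost invertible. -/
def DD {n : ℕ} (lam : Fin (n+2) → ℝ) (i : Fin (n+2)) :
    Set (Matrix (Fin (n+2)) (Fin (n+2)) ℝ) :=
  {T ∈ TSet lam | AlmostInv (T - lam i • 1)}

/-- A simple shift strategy. -/
def SimpleShift {n : ℕ} (lam : Fin (n+2) → ℝ)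
    (σ : Matrix (Fin (n+2)) (Fin (n+2)) ℝ → ℝ) : Prop :=
  (∀ T ∈ TSet lam, σ (En n * T * En n) = σ T) ∧
  ∃ C > 0, ∀ T ∈ TSet lam, ∃ i : Fin (n+2), |σ T - lam i| ≤ C * |lowb T|

/-- The vector space of real symmetric tridiagonal matrices. -/
def STSpace (n : ℕ) : Submodule ℝ (Matrix (Fin (n+2)) (Fin (n+2)) ℝ) where
  carrier := {T | SymTridiag T}
  add_mem' := by
    rintro a b ⟨ha1, ha2⟩ ⟨hb1, hb2⟩
    refine ⟨by rw [Matrix.transpose_add, ha1, hb1], fun i j h => ?_⟩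
    simp [Matrix.add_apply, ha2 i j h, hb2 i j h]
  zero_mem' := ⟨Matrix.transpose_zero, fun i j _ => rfl⟩
  smul_mem' := by
    rintro c a ⟨ha1, ha2⟩
    refine ⟨by rw [Matrix.transpose_smul, ha1], fun i j h => ?_⟩
    simp [Matrix.smul_apply, ha2 i j h]

/-- `σ` is smooth near `A ⊆ 𝒯_Λ`: there are an open subset `U` of the vector space of
symmetric tridiagonal matrices containing `A` and a `C^∞` function on `U` agreeing with
`σ` on `U ∩ 𝒯_Λ`. -/
def SmoothNear {n : ℕ} (lam : Fin (n+2) → ℝ)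
    (σ : Matrix (Fin (n+2)) (Fin (n+2)) ℝ → ℝ)
    (A : Set (Matrix (Fin (n+2)) (Fin (n+2)) ℝ)) : Prop :=
  ∃ (U : Set (STSpace n)) (σt : STSpace n → ℝ),
    IsOpen U ∧
    (∀ T : STSpace n, (T : Matrix (Fin (n+2)) (Fin (n+2)) ℝ) ∈ A → T ∈ U) ∧
    ContDiffOn ℝ (⊤ : ℕ∞) σt U ∧
    ∀ T : STSpace n, T ∈ U → (T : Matrix (Fin (n+2)) (Fin (n+2)) ℝ) ∈ TSet lam →
      σt T = σ (T : Matrix (Fin (n+2)) (Fin (n+2)) ℝ)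

/-- The Frobenius norm `‖A‖ = √(trace(Aᵀ A))`. -/
def frobNorm {n : ℕ} (A : Matrix (Fin (n+2)) (Fin (n+2)) ℝ) : ℝ :=
  Real.sqrt (Matrix.trace (Aᵀ * A))

end

theorem stmt1 (n : ℕ) (T : Matrix (Fin (n+2)) (Fin (n+2)) ℝ) (s : ℝ)
    (hT : SymTridiag T) (hai : AlmostInv (T - s • 1))
    (Q R : Matrix (Fin (n+2)) (Fin (n+2)) ℝ) (hQR : IsQsRs (T - s • 1) Q R) :
    SymTridiag (Qᵀ * T * Q) ∧
    (Qᵀ * T * Q).charpoly = T.charpoly ∧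
    (∀ i : Fin (n+1),
      (Qᵀ * T * Q) i.succ i.castSucc * R i.castSucc i.castSucc
        = R i.succ i.succ * T i.succ i.castSucc) ∧
    (∀ i : Fin (n+1), i ≠ Fin.last n →
      Real.sign ((Qᵀ * T * Q) i.succ i.castSucc) = Real.sign (T i.succ i.castSucc)) := by
  obtain ⟨hQQ, hdet, hRtri, hRpos, hM⟩ := hQR
  -- Q is lower Hessenberg
  have hQ0 : ∀ m : ℕ, ∀ j i : Fin (n+2), j.val = m → j.val + 1 < i.val → Q i j = 0 := by
    intro m
    induction m using Nat.strong_induction_on with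
    | _ m ih =>
      intro j i hjm hij
      have hjlt : j.val < n + 1 := by have := i.isLt; omega
      have hRjj : 0 < R j j := by
        have h := hRpos ⟨j.val, hjlt⟩
        have hc : (Fin.castSucc ⟨j.val, hjlt⟩ : Fin (n+2)) = j := by
          apply Fin.ext; simp
        rwa [hc] at h
      have hij' : i ≠ j := by
        intro h; rw [h] at hij; omega
      have hMij : (T - s • 1) i j = 0 := by
        have hTij := hT.2 i j (Or.inr hij)
        simp [Matrix.sub_apply, Matrix.smul_apply, Matrix.one_apply_ne hij', hTij]
      rw [hM, Matrix.mul_apply] at hMij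
      have hsum : ∑ k, Q i k * R k j = Q i j * R j j := by
        apply Finset.sum_eq_single
        · intro k _ hk
          rcases lt_or_gt_of_ne (Fin.val_ne_of_ne hk) with h | h
          · have : Q i k = 0 := ih k.val (by omega) k i rfl (by omega)
            rw [this, zero_mul]
          · have : R k j = 0 := hRtri k j (by exact Fin.lt_def.mpr h)
            rw [this, mul_zero]
        · intro h; exact absurd (Finset.mem_univ j) h
      rw [hsum] at hMij
      exact (mul_eq_zero.mp hMij).resolve_right (ne_of_gt hRjj)
  have hQhess : ∀ i j : Fin (n+2), j.val + 1 < i.val → Q i j = 0 :=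
    fun i j h => hQ0 j.val j i rfl h
  -- T' = R * Q + s • 1
  have hTeq : T = Q * R + s • 1 := by
    rw [← hM]; abel
  have hT' : Qᵀ * T * Q = R * Q + s • 1 := by
    rw [hTeq]
    rw [Matrix.mul_add, Matrix.add_mul, Matrix.mul_smul, Matrix.mul_one,
      Matrix.smul_mul, ← Matrix.mul_assoc Qᵀ Q R, hQQ, Matrix.one_mul]
  -- lower zeros
  have hlow : ∀ i j : Fin (n+2), j.val + 1 < i.val → (Qᵀ * T * Q) i j = 0 := by
    intro i j h
    have hij' : i ≠ j := by intro he; rw [he] at h; omega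
    rw [hT', Matrix.add_apply, Matrix.smul_apply, Matrix.one_apply_ne hij',
      Matrix.mul_apply]
    have : ∑ k, R i k * Q k j = 0 := by
      apply Finset.sum_eq_zero
      intro k _
      rcases lt_or_ge k.val i.val with hk | hk
      · rw [hRtri i k (Fin.lt_def.mpr hk), zero_mul]
      · rw [hQhess k j (by omega), mul_zero]
    rw [this]; simp
  -- symmetry
  have hsym : (Qᵀ * T * Q)ᵀ = Qᵀ * T * Q := by
    rw [Matrix.transpose_mul, Matrix.transpose_mul, Matrix.transpose_transpose, hT.1,
      Matrix.mul_assoc]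
  have hstd : SymTridiag (Qᵀ * T * Q) := by
    refine ⟨hsym, fun i j h => ?_⟩
    rcases h with h | h
    · have := congrFun (congrFun hsym i) j
      rw [Matrix.transpose_apply] at this
      rw [← this]
      exact hlow j i h
    · exact hlow i j h
  -- subdiagonal formulas
  have hsub : ∀ i : Fin (n+1),
      (Qᵀ * T * Q) i.succ i.castSucc = R i.succ i.succ * Q i.succ i.castSucc := by
    intro i
    have hne : i.succ ≠ i.castSucc := by
      intro h; have := congrArg Fin.val h; simp at this
    rw [hT', Matrix.add_apply, Matrix.smul_apply, Matrix.one_apply_ne hne,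
      Matrix.mul_apply]
    rw [smul_eq_mul, mul_zero, add_zero]
    apply Finset.sum_eq_single
    · intro k _ hk
      rcases lt_or_gt_of_ne (Fin.val_ne_of_ne hk) with h | h
      · rw [hRtri i.succ k (Fin.lt_def.mpr (by simpa using h)), zero_mul]
      · rw [hQhess k i.castSucc (by simp at h ⊢; omega), mul_zero]
    · intro h; exact absurd (Finset.mem_univ _) h
  have hMsub : ∀ i : Fin (n+1),
      T i.succ i.castSucc = Q i.succ i.castSucc * R i.castSucc i.castSucc := by
    intro i
    have hne : i.succ ≠ i.castSucc := by
      intro h; have := congrArg Fin.val h; simp at this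
    have h1 : (T - s • 1) i.succ i.castSucc = T i.succ i.castSucc := by
      simp [Matrix.sub_apply, Matrix.smul_apply, Matrix.one_apply_ne hne]
    rw [← h1, hM, Matrix.mul_apply]
    apply Finset.sum_eq_single
    · intro k _ hk
      rcases lt_or_gt_of_ne (Fin.val_ne_of_ne hk) with h | h
      · rw [hQhess i.succ k (by simp at h ⊢; omega), zero_mul]
      · rw [hRtri k i.castSucc (Fin.lt_def.mpr (by simpa using h)), mul_zero]
    · intro h; exact absurd (Finset.mem_univ _) h
  have hclaim3 : ∀ i : Fin (n+1),
      (Qᵀ * T * Q) i.succ i.castSucc * R i.castSucc i.castSucc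
        = R i.succ i.succ * T i.succ i.castSucc := by
    intro i; rw [hsub i, hMsub i]; ring
  -- charpoly
  have hchar : (Qᵀ * T * Q).charpoly = T.charpoly := by
    have hQ' : Q * Qᵀ = 1 := mul_eq_one_comm.mp hQQ
    have key : charmatrix (Qᵀ * T * Q) =
        (Qᵀ).map (Polynomial.C : ℝ →+* Polynomial ℝ) * charmatrix T
          * Q.map (Polynomial.C : ℝ →+* Polynomial ℝ) := by
      have h1 : (Qᵀ).map (Polynomial.C : ℝ →+* Polynomial ℝ)
          * Q.map (Polynomial.C : ℝ →+* Polynomial ℝ) = 1 := by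
        rw [← Matrix.map_mul, hQQ]; simp
      have h2 : ∀ A : Matrix (Fin (n+2)) (Fin (n+2)) (Polynomial ℝ),
          A * Matrix.scalar (Fin (n+2)) (Polynomial.X : Polynomial ℝ)
            = Matrix.scalar (Fin (n+2)) (Polynomial.X : Polynomial ℝ) * A :=
        fun A => (scalar_commute (Polynomial.X : Polynomial ℝ) (Commute.all _) A).symm
      unfold charmatrix
      simp only [RingHom.mapMatrix_apply]
      rw [Matrix.mul_sub, Matrix.sub_mul, ← Matrix.map_mul, ← Matrix.map_mul]
      congr 1
      rw [Matrix.mul_assoc, ← h2, ← Matrix.mul_assoc, h1, Matrix.one_mul]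
    rw [Matrix.charpoly, Matrix.charpoly, key, Matrix.det_mul, Matrix.det_mul]
    have hd : ((Qᵀ).map (Polynomial.C : ℝ →+* Polynomial ℝ)).det
        * (Q.map (Polynomial.C : ℝ →+* Polynomial ℝ)).det = 1 := by
      rw [mul_comm, ← Matrix.det_mul, ← Matrix.map_mul, hQ']; simp
    rw [mul_right_comm, hd, one_mul]
  refine ⟨hstd, hchar, hclaim3, ?_⟩
  -- signs
  intro i hi
  have ha : 0 < R i.castSucc i.castSucc := hRpos i
  have hb : 0 < R i.succ i.succ := by
    have hlt : i.val + 1 < n + 1 := by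
      have := i.isLt
      have : i.val ≠ n := fun h => hi (Fin.ext h)
      omega
    have h := hRpos ⟨i.val + 1, hlt⟩
    have hc : (Fin.castSucc ⟨i.val + 1, hlt⟩ : Fin (n+2)) = i.succ := by
      apply Fin.ext; simp
    rwa [hc] at h
  have heq := hclaim3 i
  set x := (Qᵀ * T * Q) i.succ i.castSucc
  set y := T i.succ i.castSucc
  rcases lt_trichotomy y 0 with hy | hy | hy
  · have hx : x < 0 := by nlinarith
    rw [Real.sign_of_neg hx, Real.sign_of_neg hy]
  · rw [hy] at heq ⊢
    have hx : x = 0 := by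
      have : x * R i.castSucc i.castSucc = 0 := by rw [heq]; ring
      exact (mul_eq_zero.mp this).resolve_right (ne_of_gt ha)
    rw [hx]
  · have hx : 0 < x := by nlinarith
    rw [Real.sign_of_pos hx, Real.sign_of_pos hy]
end

section
/- Let T be a real symmetric tridiagonal n×n matrix and s ∈ ℝ such that T − sI is almost invertible and det(T − sI) = 0. Then the signed shifted QR step F_s(T) satisfies (F_s(T))_{n,n−1} = 0 and (F_s(T))_{n,n} = s. -/
open Matrix Filter Topology

attribute [local instance] Matrix.normedAddCommGroup Matrix.normedSpace

noncomputable section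

attribute [local instance] Classical.propDecidable

end

/-!
If `T - s • 1 = Q * R` is the `Q⋆R⋆` factorization, then `Fs s T = Qᵀ * T * Q = R * Q + s • 1`.
As `det Q = 1`, `det R = det (T - s • 1) = 0`; the first `n + 1` diagonal entries of the upper
triangular `R` are positive, so the last one vanishes and the whole last row of `R` is zero.
Hence the last row of `Fs s T` is that of `s • 1`.
The factorization itself comes from Gram–Schmidt applied to the columns of `T - s • 1`.
-/

open scoped InnerProductSpace

namespace InnerProductSpace

variable {ι E : Type*} [LinearOrder ι] [LocallyFiniteOrderBot ι] [WellFoundedLT ι]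
  [NormedAddCommGroup E] [InnerProductSpace ℝ E]

theorem inner_gramSchmidt_self (f : ι → E) (i : ι) :
    ⟪gramSchmidt ℝ f i, f i⟫_ℝ = ‖gramSchmidt ℝ f i‖ ^ 2 := by
  conv_lhs => rw [gramSchmidt_def' ℝ f i]
  rw [inner_add_right, inner_sum, Finset.sum_eq_zero, add_zero, real_inner_self_eq_norm_sq]
  intro k hk
  simp [Submodule.starProjection_singleton, inner_smul_right,
    gramSchmidt_orthogonal ℝ f (Finset.mem_Iio.mp hk).ne']

theorem inner_gramSchmidtOrthonormalBasis_self_pos [Fintype ι] [FiniteDimensional ℝ E]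
    (h : Module.finrank ℝ E = Fintype.card ι) {f : ι → E} {i : ι}
    (hf : LinearIndependent ℝ (f ∘ ((↑) : Set.Iic i → ι))) :
    0 < ⟪gramSchmidtOrthonormalBasis h f i, f i⟫_ℝ := by
  have hne : gramSchmidt ℝ f i ≠ 0 := gramSchmidt_ne_zero_coe i hf
  have hpos : 0 < ‖gramSchmidt ℝ f i‖ := norm_pos_iff.mpr hne
  rw [gramSchmidtOrthonormalBasis_apply h (by simp [gramSchmidtNormed, hne]), gramSchmidtNormed,
    real_inner_smul_left, inner_gramSchmidt_self]
  positivity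

end InnerProductSpace

namespace Matrix

theorem exists_orthogonal_transpose_mul_isUpperTriangular {ι : Type*} [Fintype ι]
    [DecidableEq ι] [LinearOrder ι] [LocallyFiniteOrderBot ι] [WellFoundedLT ι]
    (M : Matrix ι ι ℝ) :
    ∃ Q : Matrix ι ι ℝ, Qᵀ * Q = 1 ∧ (Qᵀ * M).IsUpperTriangular ∧
      ∀ i, LinearIndependent ℝ (fun j : Set.Iic i => Mᵀ j) → 0 < (Qᵀ * M) i i := by
  let f : ι → EuclideanSpace ℝ ι := fun j => WithLp.toLp 2 (Mᵀ j)
  let b := InnerProductSpace.gramSchmidtOrthonormalBasis finrank_euclideanSpace f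
  let Q := (EuclideanSpace.basisFun ι ℝ).toBasis.toMatrix b
  have hQM : ∀ i j, (Qᵀ * M) i j = ⟪b i, f j⟫_ℝ := by
    intro i j
    simp [Q, f, Matrix.mul_apply, PiLp.inner_apply, mul_comm, Module.Basis.toMatrix_apply]
  have hQ : Qᵀ * Q = 1 := by
    simpa using (EuclideanSpace.basisFun ι ℝ).toMatrix_orthonormalBasis_conjTranspose_mul_self b
  refine ⟨Q, hQ, fun i j hij => ?_, fun i hi => ?_⟩
  · rw [hQM]
    exact InnerProductSpace.gramSchmidtOrthonormalBasis_inv_triangular _ f hij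
  · rw [hQM]
    exact InnerProductSpace.inner_gramSchmidtOrthonormalBasis_self_pos _
      (hi.map' (WithLp.linearEquiv 2 ℝ (ι → ℝ)).symm.toLinearMap
        (WithLp.linearEquiv 2 ℝ (ι → ℝ)).symm.ker)

end Matrix

section SignedQR

variable {n : ℕ}

theorem transpose_En : (En n)ᵀ = En n := diagonal_transpose _

theorem En_mul_self : En n * En n = 1 := by
  rw [En, diagonal_mul_diagonal, ← diagonal_one]
  congr 1
  ext i
  split_ifs <;> norm_num

theorem det_En : (En n).det = -1 := by
  simp [En, det_diagonal, Finset.prod_ite_eq']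

theorem En_mul_apply (R : Matrix (Fin (n+2)) (Fin (n+2)) ℝ) (i j : Fin (n+2)) :
    (En n * R) i j = (if i = Fin.last (n+1) then -1 else 1) * R i j :=
  diagonal_mul _ _ _ _

theorem AlmostInv.linearIndependent_Iic_castSucc {M : Matrix (Fin (n+2)) (Fin (n+2)) ℝ}
    (hM : AlmostInv M) (i : Fin (n+1)) :
    LinearIndependent ℝ (fun j : Set.Iic i.castSucc => Mᵀ j) := by
  have hle (j : Set.Iic i.castSucc) : (j : Fin (n+2)).val < n + 1 :=
    lt_of_le_of_lt (Fin.le_def.mp j.2) i.isLt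
  exact hM.comp (fun j : Set.Iic i.castSucc => Fin.castLT j.1 (hle j)) fun j k hjk =>
    Subtype.ext (by simpa [Fin.ext_iff] using hjk)

theorem exists_isQsRs {M : Matrix (Fin (n+2)) (Fin (n+2)) ℝ} (hM : AlmostInv M) :
    ∃ Q R, IsQsRs M Q R := by
  obtain ⟨Q, hQ, htri, hpos⟩ := exists_orthogonal_transpose_mul_isUpperTriangular M
  have hMQR : M = Q * (Qᵀ * M) := by
    rw [← Matrix.mul_assoc, mul_eq_one_comm.mp hQ, Matrix.one_mul]
  have hpos' : ∀ i : Fin (n+1), 0 < (Qᵀ * M) i.castSucc i.castSucc :=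
    fun i => hpos _ (hM.linearIndependent_Iic_castSucc i)
  have hdet : Q.det * Q.det = 1 := by
    simpa [det_mul, det_transpose] using congrArg det hQ
  rcases mul_self_eq_one_iff.mp hdet with hdet | hdet
  · exact ⟨Q, Qᵀ * M, hQ, hdet, htri, hpos', hMQR⟩
  -- A negative determinant is repaired by flipping the sign of the last column of `Q`.
  refine ⟨Q * En n, En n * (Qᵀ * M), ?_, ?_, fun i j hij => ?_, fun i => ?_, ?_⟩
  · rw [transpose_mul, transpose_En, Matrix.mul_assoc, ← Matrix.mul_assoc Qᵀ, hQ,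
      Matrix.one_mul, En_mul_self]
  · rw [det_mul, hdet, det_En]; norm_num
  · rw [En_mul_apply, htri hij, mul_zero]
  · rw [En_mul_apply, if_neg (Fin.castSucc_lt_last i).ne, one_mul]
    exact hpos' i
  · rw [Matrix.mul_assoc, ← Matrix.mul_assoc (En n), En_mul_self, Matrix.one_mul, ← hMQR]

end SignedQR

namespace IsQsRs

variable {n : ℕ} {M Q R : Matrix (Fin (n+2)) (Fin (n+2)) ℝ}

theorem det_eq (h : IsQsRs M Q R) : M.det = R.det := by
  rw [h.2.2.2.2, det_mul, h.2.1, one_mul]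

theorem last_row_eq_zero (h : IsQsRs M Q R) (hM : M.det = 0) (j : Fin (n+2)) :
    R (Fin.last (n+1)) j = 0 := by
  have htri : R.IsUpperTriangular := h.2.2.1
  rcases (Fin.le_last j).lt_or_eq with hj | rfl
  · exact htri hj
  have hprod : (∏ i : Fin (n+1), R i.castSucc i.castSucc) ≠ 0 :=
    (Finset.prod_pos fun i _ => h.2.2.2.1 i).ne'
  have hdet : (∏ i : Fin (n+1), R i.castSucc i.castSucc) * R (Fin.last _) (Fin.last _) = 0 := by
    rw [← Fin.prod_univ_castSucc (fun i => R i i), ← det_of_isUpperTriangular htri,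
      ← h.det_eq, hM]
  exact (mul_eq_zero.mp hdet).resolve_left hprod

theorem transpose_mul_mul_eq {T : Matrix (Fin (n+2)) (Fin (n+2)) ℝ} {s : ℝ}
    (h : IsQsRs (T - s • 1) Q R) : Qᵀ * T * Q = R * Q + s • 1 := by
  have hT : T = Q * R + s • 1 := by rw [← h.2.2.2.2, sub_add_cancel]
  rw [hT, Matrix.mul_add, Matrix.add_mul, ← Matrix.mul_assoc, h.1, Matrix.one_mul,
    Matrix.mul_smul, Matrix.mul_one, Matrix.smul_mul, h.1]

end IsQsRs

theorem exists_isQsRs_and_Fs_eq {n : ℕ} {T : Matrix (Fin (n+2)) (Fin (n+2)) ℝ} {s : ℝ}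
    (h : AlmostInv (T - s • 1)) :
    ∃ Q R, IsQsRs (T - s • 1) Q R ∧ Fs s T = Qᵀ * T * Q := by
  have hex : ∃ Q R, IsQsRs (T - s • 1) Q R := exists_isQsRs h
  exact ⟨_, _, hex.choose_spec.choose_spec, by rw [Fs, dif_pos hex]⟩

theorem Fs_last_row {n : ℕ} {T : Matrix (Fin (n+2)) (Fin (n+2)) ℝ} {s : ℝ}
    (hai : AlmostInv (T - s • 1)) (hdet : (T - s • 1).det = 0) :
    Fs s T (Fin.last (n+1)) = Pi.single (Fin.last (n+1)) s := by
  obtain ⟨Q, R, hQR, hFs⟩ := exists_isQsRs_and_Fs_eq hai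
  ext j
  have hRQ : (R * Q) (Fin.last (n+1)) j = 0 := by
    simp [mul_apply, hQR.last_row_eq_zero hdet]
  rw [hFs, hQR.transpose_mul_mul_eq, Matrix.add_apply, hRQ, zero_add]
  simp [Pi.single_apply, one_apply, eq_comm]

theorem stmt2_general (n : ℕ) (T : Matrix (Fin (n+2)) (Fin (n+2)) ℝ) (s : ℝ)
    (hai : AlmostInv (T - s • 1))
    (hdet : (T - s • (1 : Matrix (Fin (n+2)) (Fin (n+2)) ℝ)).det = 0) :
    lowb (Fs s T) = 0 ∧ Fs s T (Fin.last (n+1)) (Fin.last (n+1)) = s := by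
  have hrow := Fs_last_row hai hdet
  refine ⟨?_, by rw [hrow, Pi.single_eq_same]⟩
  have hne : (⟨n, by omega⟩ : Fin (n+2)) ≠ Fin.last (n+1) := by simp [Fin.ext_iff]
  rw [lowb, hrow, Pi.single_eq_of_ne hne]

theorem stmt2 (n : ℕ) (T : Matrix (Fin (n+2)) (Fin (n+2)) ℝ) (s : ℝ)
    (hT : SymTridiag T) (hai : AlmostInv (T - s • 1))
    (hdet : (T - s • (1 : Matrix (Fin (n+2)) (Fin (n+2)) ℝ)).det = 0) :
    lowb (Fs s T) = 0 ∧ Fs s T (Fin.last (n+1)) (Fin.last (n+1)) = s :=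
  stmt2_general n T s hai hdet
end

section
/- Let T be a real symmetric tridiagonal n×n matrix, s ∈ ℝ, and E a diagonal matrix all of whose diagonal entries are ±1. If T − sI is almost invertible, then ETE − sI is almost invertible and F_s(ETE) = E · F_s(T) · E. If T − sI is invertible, define Φ(T,s) := Qᵀ T, Q where T − sI = QR is the QR factorization; then Φ(ETE, s) = E · Φ(T,s) · E, and moreover Φ(T,s) = F_s(T) when det(T − sI) > 0, while Φ(T,s) = E_n · F_s(T) · E_n when det(T − sI) < 0. -/
open Matrix Filter Topology

attribute [local instance] Matrix.normedAddCommGroup Matrix.normedSpace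

noncomputable section

attribute [local instance] Classical.propDecidable

end

section AuxLemmas

-- key uniqueness lemma
lemma keyU {N : ℕ} (U R1 R2 : Matrix (Fin N) (Fin N) ℝ)
    (hU : Uᵀ * U = 1)
    (t1 : ∀ i j, j < i → R1 i j = 0) (t2 : ∀ i j, j < i → R2 i j = 0)
    (hUR : U * R1 = R2)
    (P : Fin N → Prop)
    (hd1 : ∀ j, P j → 0 < R1 j j) (hd2 : ∀ j, P j → 0 < R2 j j) :
    ∀ j, (∀ k, k ≤ j → P k) → ∀ i, U i j = if i = j then (1:ℝ) else 0 := by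
  suffices H : ∀ m : ℕ, ∀ j : Fin N, j.val < m → (∀ k, k ≤ j → P k) →
      ∀ i, U i j = if i = j then (1:ℝ) else 0 by
    intro j hj i; exact H (j.val + 1) j (Nat.lt_succ_self _) hj i
  intro m
  induction m with
  | zero => intro j hj; omega
  | succ m ih =>
    intro j hj hP
    have IH : ∀ k : Fin N, k < j → ∀ i, U i k = if i = k then (1:ℝ) else 0 := by
      intro k hk i
      exact ih k (by omega) (fun k' hk' => hP k' (le_trans hk' hk.le)) i
    -- step1 : entries above the diagonal of column j vanish
    have step1 : ∀ i, i < j → U i j = 0 := by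
      intro i hi
      have h0 : (Uᵀ * U) i j = 0 := by rw [hU]; exact Matrix.one_apply_ne (ne_of_lt hi)
      rw [Matrix.mul_apply] at h0
      rw [Finset.sum_eq_single i] at h0
      · rw [Matrix.transpose_apply, IH i hi i, if_pos rfl, one_mul] at h0
        exact h0
      · intro k _ hk
        rw [Matrix.transpose_apply, IH i hi k, if_neg hk, zero_mul]
      · simp
    -- step2 : the column equation
    have step2 : ∀ i, j ≤ i → U i j * R1 j j = R2 i j := by
      intro i hji
      have h : (U * R1) i j = R2 i j := by rw [hUR]
      rw [Matrix.mul_apply, Finset.sum_eq_single j] at h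
      · exact h
      · intro k _ hk
        rcases hk.lt_or_gt with hk' | hk'
        · have hik : i ≠ k := by
            intro h; subst h; exact absurd (lt_of_lt_of_le hk' hji) (lt_irrefl _)
          rw [IH k hk', if_neg hik, zero_mul]
        · rw [t1 k j hk', mul_zero]
      · simp
    have hR1 : 0 < R1 j j := hd1 j (hP j le_rfl)
    have hR2 : 0 < R2 j j := hd2 j (hP j le_rfl)
    -- step3 : off-diagonal entries of column j vanish
    have step3 : ∀ i, i ≠ j → U i j = 0 := by
      intro i hij
      rcases hij.lt_or_gt with hi | hi
      · exact step1 i hi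
      · have h := step2 i hi.le
        rw [t2 i j hi] at h
        exact (mul_eq_zero.mp h).resolve_right (ne_of_gt hR1)
    intro i
    rcases eq_or_ne i j with rfl | hij
    · rw [if_pos rfl]
      have hpos : 0 < U i i := by
        have h := step2 i le_rfl
        nlinarith
      have h1 : (Uᵀ * U) i i = 1 := by rw [hU]; exact Matrix.one_apply_eq i
      rw [Matrix.mul_apply, Finset.sum_eq_single i] at h1
      · rw [Matrix.transpose_apply] at h1; nlinarith
      · intro k _ hk
        rw [Matrix.transpose_apply, step3 k hk, zero_mul]
      · simp
    · rw [if_neg hij]; exact step3 i hij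

lemma conj_cancel {N : ℕ} (E A : Matrix (Fin N) (Fin N) ℝ) (hEE : E * E = 1) :
    E * (E * A * E) * E = A := by
  simp only [← Matrix.mul_assoc]
  rw [hEE, Matrix.one_mul, Matrix.mul_assoc, hEE, Matrix.mul_one]

lemma conj_conj {N : ℕ} (E A B : Matrix (Fin N) (Fin N) ℝ) (hET : Eᵀ = E) (hEE : E * E = 1) :
    (E * A * E)ᵀ * (E * B * E) * (E * A * E) = E * (Aᵀ * B * A) * E := by
  simp only [Matrix.transpose_mul, hET, ← Matrix.mul_assoc]
  rw [Matrix.mul_assoc (E * Aᵀ) E E, hEE, Matrix.mul_one,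
      Matrix.mul_assoc (E * Aᵀ * B) E E, hEE, Matrix.mul_one]

lemma conj_orth {N : ℕ} (E Q : Matrix (Fin N) (Fin N) ℝ) (hET : Eᵀ = E) (hEE : E * E = 1)
    (hQ : Qᵀ * Q = 1) : (E * Q * E)ᵀ * (E * Q * E) = 1 := by
  simp only [Matrix.transpose_mul, hET, ← Matrix.mul_assoc]
  rw [Matrix.mul_assoc (E * Qᵀ) E E, hEE, Matrix.mul_one, Matrix.mul_assoc E Qᵀ Q, hQ,
      Matrix.mul_one, hEE]

lemma mulE_conj {N : ℕ} (E A B : Matrix (Fin N) (Fin N) ℝ) (hEE : E * E = 1) :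
    (E * A * E) * (E * B * E) = E * (A * B) * E := by
  simp only [← Matrix.mul_assoc]
  rw [Matrix.mul_assoc (E * A) E E, hEE, Matrix.mul_one, Matrix.mul_assoc E A B]

lemma orth_flip {N : ℕ} {Q : Matrix (Fin N) (Fin N) ℝ} (h : Qᵀ * Q = 1) : Q * Qᵀ = 1 :=
  mul_eq_one_comm.mp h

lemma uniq_core {N : ℕ} {M Q1 R1 Q2 R2 : Matrix (Fin N) (Fin N) ℝ}
    (hQ1 : Q1ᵀ * Q1 = 1) (hQ2 : Q2ᵀ * Q2 = 1)
    (hM1 : M = Q1 * R1) (hM2 : M = Q2 * R2) :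
    (Q2ᵀ * Q1)ᵀ * (Q2ᵀ * Q1) = 1 ∧ (Q2ᵀ * Q1) * R1 = R2 := by
  constructor
  · rw [Matrix.transpose_mul, Matrix.transpose_transpose, Matrix.mul_assoc,
      ← Matrix.mul_assoc Q2, orth_flip hQ2, Matrix.one_mul, hQ1]
  · rw [Matrix.mul_assoc, ← hM1, hM2, ← Matrix.mul_assoc, hQ2, Matrix.one_mul]

lemma uniq_finish {N : ℕ} {Q1 Q2 : Matrix (Fin N) (Fin N) ℝ}
    (hQ2 : Q2ᵀ * Q2 = 1) (hU : Q2ᵀ * Q1 = 1) : Q1 = Q2 := by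
  calc Q1 = (Q2 * Q2ᵀ) * Q1 := by rw [orth_flip hQ2, Matrix.one_mul]
  _ = Q2 * (Q2ᵀ * Q1) := by rw [Matrix.mul_assoc]
  _ = Q2 := by rw [hU, Matrix.mul_one]

lemma uniqQR {n : ℕ} {M Q1 R1 Q2 R2 : Matrix (Fin (n+2)) (Fin (n+2)) ℝ}
    (h1 : IsQR M Q1 R1) (h2 : IsQR M Q2 R2) : Q1 = Q2 := by
  obtain ⟨hQ1, t1, d1, hM1⟩ := h1
  obtain ⟨hQ2, t2, d2, hM2⟩ := h2
  obtain ⟨hUU, hUR⟩ := uniq_core hQ1 hQ2 hM1 hM2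
  have hcols := keyU (Q2ᵀ * Q1) R1 R2 hUU t1 t2 hUR (fun _ => True)
    (fun j _ => d1 j) (fun j _ => d2 j)
  apply uniq_finish hQ2
  ext i j
  rw [hcols j (fun _ _ => trivial) i, Matrix.one_apply]

lemma uniqQsRs {n : ℕ} {M Q1 R1 Q2 R2 : Matrix (Fin (n+2)) (Fin (n+2)) ℝ}
    (h1 : IsQsRs M Q1 R1) (h2 : IsQsRs M Q2 R2) : Q1 = Q2 := by
  obtain ⟨hQ1, hdet1, t1, d1, hM1⟩ := h1
  obtain ⟨hQ2, hdet2, t2, d2, hM2⟩ := h2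
  obtain ⟨hUU, hUR⟩ := uniq_core hQ1 hQ2 hM1 hM2
  set U := Q2ᵀ * Q1 with hUdef
  set L := Fin.last (n+1) with hL
  have hpos : ∀ (R : Matrix (Fin (n+2)) (Fin (n+2)) ℝ),
      (∀ i : Fin (n+1), 0 < R i.castSucc i.castSucc) →
      ∀ j : Fin (n+2), j ≠ L → 0 < R j j := by
    intro R hR j hj
    have := hR (j.castPred hj)
    rwa [Fin.castSucc_castPred] at this
  have hne : ∀ j : Fin (n+2), j ≠ L → ∀ i, U i j = if i = j then (1:ℝ) else 0 := by
    intro j hj i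
    refine keyU U R1 R2 hUU t1 t2 hUR (fun k => k ≠ L) (hpos R1 d1) (hpos R2 d2) j ?_ i
    intro k hk hkL
    exact hj (le_antisymm (Fin.le_last j) (hkL ▸ hk))
  have hlast0 : ∀ k, k ≠ L → U k L = 0 := by
    intro k hk
    have h0 : (Uᵀ * U) k L = 0 := by rw [hUU]; exact Matrix.one_apply_ne hk
    rw [Matrix.mul_apply, Finset.sum_eq_single k] at h0
    · rwa [Matrix.transpose_apply, hne k hk k, if_pos rfl, one_mul] at h0
    · intro b _ hb
      rw [Matrix.transpose_apply, hne k hk b, if_neg hb, zero_mul]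
    · simp
  have hCC : U L L * U L L = 1 := by
    have h1 : (Uᵀ * U) L L = 1 := by rw [hUU]; exact Matrix.one_apply_eq L
    rw [Matrix.mul_apply, Finset.sum_eq_single L] at h1
    · rwa [Matrix.transpose_apply] at h1
    · intro b _ hb
      rw [Matrix.transpose_apply, hlast0 b hb, zero_mul]
    · simp
  have hUdiag : U = Matrix.diagonal (fun i => if i = L then U L L else 1) := by
    ext i j
    rcases eq_or_ne i j with rfl | hij
    · rw [Matrix.diagonal_apply_eq]
      rcases eq_or_ne i L with rfl | hiL
      · rw [if_pos rfl]
      · rw [if_neg hiL, hne i hiL i, if_pos rfl]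
    · rw [Matrix.diagonal_apply_ne _ hij]
      rcases eq_or_ne j L with rfl | hjL
      · exact hlast0 i hij
      · rw [hne j hjL i, if_neg hij]
  have hdetU : U.det = 1 := by
    rw [hUdef, Matrix.det_mul, Matrix.det_transpose, hdet1, hdet2, one_mul]
  have hULL : U L L = 1 := by
    rw [hUdiag, Matrix.det_diagonal] at hdetU
    rwa [Finset.prod_ite_eq' Finset.univ L (fun _ => U L L), if_pos (Finset.mem_univ L)] at hdetU
  have hU1 : U = 1 := by
    rw [hUdiag, hULL]
    ext i j
    rcases eq_or_ne i j with rfl | hij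
    · rw [Matrix.diagonal_apply_eq, Matrix.one_apply_eq]
      split <;> rfl
    · rw [Matrix.diagonal_apply_ne _ hij, Matrix.one_apply_ne hij]
  exact uniq_finish hQ2 hU1

lemma sign_sq {N : ℕ} {d : Fin N → ℝ} (hd : ∀ i, d i = 1 ∨ d i = -1) (i : Fin N) :
    d i * d i = 1 := by
  rcases hd i with h | h <;> rw [h] <;> norm_num

lemma sign_ne {N : ℕ} {d : Fin N → ℝ} (hd : ∀ i, d i = 1 ∨ d i = -1) (i : Fin N) :
    d i ≠ 0 := by
  rcases hd i with h | h <;> rw [h] <;> norm_num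

lemma sign_EE {N : ℕ} {d : Fin N → ℝ} (hd : ∀ i, d i = 1 ∨ d i = -1) :
    Matrix.diagonal d * Matrix.diagonal d = 1 := by
  rw [Matrix.diagonal_mul_diagonal]
  have h : (fun i => d i * d i) = fun _ => (1:ℝ) := funext fun i => sign_sq hd i
  calc Matrix.diagonal (d * d) = Matrix.diagonal (fun i => d i * d i) := rfl
  _ = Matrix.diagonal (fun _ => (1:ℝ)) := by rw [h]
  _ = 1 := Matrix.diagonal_one

lemma sign_shift {N : ℕ} {d : Fin N → ℝ} (hd : ∀ i, d i = 1 ∨ d i = -1)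
    {M : Matrix (Fin N) (Fin N) ℝ} (s : ℝ) :
    Matrix.diagonal d * M * Matrix.diagonal d - s • 1 =
      Matrix.diagonal d * (M - s • 1) * Matrix.diagonal d := by
  rw [Matrix.mul_sub, Matrix.sub_mul]
  congr 1
  rw [Matrix.mul_smul, Matrix.smul_mul, Matrix.mul_one, sign_EE hd]

lemma sign_entry {N : ℕ} (d : Fin N → ℝ) (M : Matrix (Fin N) (Fin N) ℝ) (i j : Fin N) :
    (Matrix.diagonal d * M * Matrix.diagonal d) i j = d i * M i j * d j := by
  rw [Matrix.mul_diagonal, Matrix.diagonal_mul]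

lemma conjQsRs {n : ℕ} {d : Fin (n+2) → ℝ} (hd : ∀ i, d i = 1 ∨ d i = -1)
    {M Q R : Matrix (Fin (n+2)) (Fin (n+2)) ℝ} (h : IsQsRs M Q R) :
    IsQsRs (Matrix.diagonal d * M * Matrix.diagonal d)
      (Matrix.diagonal d * Q * Matrix.diagonal d)
      (Matrix.diagonal d * R * Matrix.diagonal d) := by
  obtain ⟨hQ, hdet, ht, hdg, hM⟩ := h
  set E := Matrix.diagonal d with hE
  have hEE : E * E = 1 := sign_EE hd
  have hET : Eᵀ = E := Matrix.diagonal_transpose d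
  refine ⟨conj_orth E Q hET hEE hQ, ?_, ?_, ?_, ?_⟩
  · have hdE : E.det * E.det = 1 := by rw [← Matrix.det_mul, hEE, Matrix.det_one]
    rw [Matrix.det_mul, Matrix.det_mul, hdet]
    nlinarith
  · intro i j hij
    rw [hE, sign_entry d R i j, ht i j hij, mul_zero, zero_mul]
  · intro i
    rw [hE, sign_entry d R _ _]
    have h1 := sign_sq hd i.castSucc
    have h2 := hdg i
    nlinarith
  · rw [hM, mulE_conj E Q R hEE]

lemma conjQR {n : ℕ} {d : Fin (n+2) → ℝ} (hd : ∀ i, d i = 1 ∨ d i = -1)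
    {M Q R : Matrix (Fin (n+2)) (Fin (n+2)) ℝ} (h : IsQR M Q R) :
    IsQR (Matrix.diagonal d * M * Matrix.diagonal d)
      (Matrix.diagonal d * Q * Matrix.diagonal d)
      (Matrix.diagonal d * R * Matrix.diagonal d) := by
  obtain ⟨hQ, ht, hdg, hM⟩ := h
  set E := Matrix.diagonal d with hE
  have hEE : E * E = 1 := sign_EE hd
  have hET : Eᵀ = E := Matrix.diagonal_transpose d
  refine ⟨conj_orth E Q hET hEE hQ, ?_, ?_, ?_⟩
  · intro i j hij
    rw [hE, sign_entry d R i j, ht i j hij, mul_zero, zero_mul]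
  · intro i
    rw [hE, sign_entry d R _ _]
    have h1 := sign_sq hd i
    have h2 := hdg i
    nlinarith
  · rw [hM, mulE_conj E Q R hEE]

lemma Fs_eq {n : ℕ} {s : ℝ} {T Q R : Matrix (Fin (n+2)) (Fin (n+2)) ℝ}
    (h : IsQsRs (T - s • 1) Q R) : Fs s T = Qᵀ * T * Q := by
  have hex : ∃ Q R, IsQsRs (T - s • 1) Q R := ⟨Q, R, h⟩
  rw [Fs, dif_pos hex]
  obtain ⟨R', hR'⟩ := hex.choose_spec
  rw [uniqQsRs hR' h]

lemma Fs_none {n : ℕ} {s : ℝ} {T : Matrix (Fin (n+2)) (Fin (n+2)) ℝ}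
    (h : ¬ ∃ Q R, IsQsRs (T - s • 1) Q R) : Fs s T = 0 := by
  rw [Fs, dif_neg h]

lemma Phi_eq {n : ℕ} {s : ℝ} {T Q R : Matrix (Fin (n+2)) (Fin (n+2)) ℝ}
    (h : IsQR (T - s • 1) Q R) : Phi T s = Qᵀ * T * Q := by
  have hex : ∃ Q R, IsQR (T - s • 1) Q R := ⟨Q, R, h⟩
  rw [Phi, dif_pos hex]
  obtain ⟨R', hR'⟩ := hex.choose_spec
  rw [uniqQR hR' h]

lemma Phi_none {n : ℕ} {s : ℝ} {T : Matrix (Fin (n+2)) (Fin (n+2)) ℝ}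
    (h : ¬ ∃ Q R, IsQR (T - s • 1) Q R) : Phi T s = 0 := by
  rw [Phi, dif_neg h]

lemma almostInv_conj {n : ℕ} {d : Fin (n+2) → ℝ} (hd : ∀ i, d i = 1 ∨ d i = -1)
    {M : Matrix (Fin (n+2)) (Fin (n+2)) ℝ} (h : AlmostInv M) :
    AlmostInv (Matrix.diagonal d * M * Matrix.diagonal d) := by
  unfold AlmostInv at h ⊢
  set f : (Fin (n+2) → ℝ) →ₗ[ℝ] (Fin (n+2) → ℝ) := (Matrix.diagonal d).mulVecLin with hf
  have hker : LinearMap.ker f = ⊥ := by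
    rw [LinearMap.ker_eq_bot]
    intro x y hxy
    have h2 := congrArg (Matrix.diagonal d).mulVec hxy
    rwa [hf, Matrix.mulVecLin_apply, Matrix.mulVecLin_apply, Matrix.mulVec_mulVec,
      Matrix.mulVec_mulVec, sign_EE hd, Matrix.one_mulVec, Matrix.one_mulVec] at h2
  have h1 := (h.map' f hker).units_smul
    (fun j : Fin (n+1) => Units.mk0 (d j.castSucc) (sign_ne hd j.castSucc))
  have heq : (fun j : Fin (n+1) => fun i => (Matrix.diagonal d * M * Matrix.diagonal d) i j.castSucc)
      = (fun j : Fin (n+1) => Units.mk0 (d j.castSucc) (sign_ne hd j.castSucc)) •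
        (f ∘ fun j : Fin (n+1) => fun i => M i j.castSucc) := by
    funext j
    funext i
    simp only [Pi.smul_apply', Pi.smul_apply, Function.comp_apply, hf, Matrix.mulVecLin_apply,
      Units.smul_def, Units.val_mk0, smul_eq_mul, sign_entry]
    rw [Matrix.mulVec_diagonal]
    ring
  rw [heq]
  exact h1

lemma detR_pos {n : ℕ} {R : Matrix (Fin (n+2)) (Fin (n+2)) ℝ}
    (ht : ∀ i j : Fin (n+2), j < i → R i j = 0) (hdg : ∀ i : Fin (n+2), 0 < R i i) :
    0 < R.det := by
  rw [Matrix.det_of_upperTriangular (fun i j hij => ht i j hij)]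
  exact Finset.prod_pos fun i _ => hdg i

lemma detR_split {n : ℕ} {R : Matrix (Fin (n+2)) (Fin (n+2)) ℝ}
    (ht : ∀ i j : Fin (n+2), j < i → R i j = 0)
    (hdg : ∀ i : Fin (n+1), 0 < R i.castSucc i.castSucc) :
    ∃ c > 0, R.det = c * R (Fin.last (n+1)) (Fin.last (n+1)) := by
  rw [Matrix.det_of_upperTriangular (fun i j hij => ht i j hij)]
  rw [Fin.prod_univ_castSucc]
  exact ⟨∏ i : Fin (n+1), R i.castSucc i.castSucc,
    Finset.prod_pos fun i _ => hdg i, rfl⟩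

lemma detQ_pm {n : ℕ} {Q : Matrix (Fin (n+2)) (Fin (n+2)) ℝ} (hQ : Qᵀ * Q = 1) :
    Q.det = 1 ∨ Q.det = -1 := by
  have h : Q.det * Q.det = 1 := by
    have := congrArg Matrix.det hQ
    rwa [Matrix.det_mul, Matrix.det_transpose, Matrix.det_one] at this
  exact mul_self_eq_one_iff.mp h

lemma en_sign (n : ℕ) : ∀ i : Fin (n+2),
    (fun i : Fin (n+2) => if i = Fin.last (n+1) then (-1:ℝ) else 1) i = 1 ∨
    (fun i : Fin (n+2) => if i = Fin.last (n+1) then (-1:ℝ) else 1) i = -1 := by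
  intro i
  dsimp only
  split
  · right; rfl
  · left; rfl

lemma en_EE (n : ℕ) : En n * En n = 1 := sign_EE (en_sign n)

lemma en_T (n : ℕ) : (En n)ᵀ = En n := Matrix.diagonal_transpose _

lemma en_det (n : ℕ) : (En n).det = -1 := by
  rw [En, Matrix.det_diagonal, Finset.prod_ite_eq' Finset.univ (Fin.last (n+1))
    (fun _ => (-1:ℝ)), if_pos (Finset.mem_univ _)]

lemma en_mul_apply {n : ℕ} (R : Matrix (Fin (n+2)) (Fin (n+2)) ℝ) (i j : Fin (n+2)) :
    (En n * R) i j = (if i = Fin.last (n+1) then (-1:ℝ) else 1) * R i j := by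
  rw [En, Matrix.diagonal_mul]

lemma en_orth {n : ℕ} {Q : Matrix (Fin (n+2)) (Fin (n+2)) ℝ} (hQ : Qᵀ * Q = 1) :
    (Q * En n)ᵀ * (Q * En n) = 1 := by
  rw [Matrix.transpose_mul, en_T, Matrix.mul_assoc, ← Matrix.mul_assoc Qᵀ Q, hQ,
    Matrix.one_mul, en_EE]

lemma en_prod {n : ℕ} (Q R : Matrix (Fin (n+2)) (Fin (n+2)) ℝ) :
    (Q * En n) * (En n * R) = Q * R := by
  rw [Matrix.mul_assoc, ← Matrix.mul_assoc (En n) (En n) R, en_EE, Matrix.one_mul]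

lemma qr_to_qsrs_pos {n : ℕ} {M Q R : Matrix (Fin (n+2)) (Fin (n+2)) ℝ}
    (h : IsQR M Q R) (hpos : 0 < M.det) : IsQsRs M Q R := by
  obtain ⟨hQ, ht, hdg, hM⟩ := h
  have hR : 0 < R.det := detR_pos ht hdg
  have hMdet : M.det = Q.det * R.det := by rw [hM, Matrix.det_mul]
  have hQdet : Q.det = 1 := by
    rcases detQ_pm hQ with h1 | h1
    · exact h1
    · exfalso; rw [h1] at hMdet; nlinarith
  exact ⟨hQ, hQdet, ht, fun i => hdg _, hM⟩

lemma qsrs_to_qr_pos {n : ℕ} {M Q R : Matrix (Fin (n+2)) (Fin (n+2)) ℝ}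
    (h : IsQsRs M Q R) (hpos : 0 < M.det) : IsQR M Q R := by
  obtain ⟨hQ, hQdet, ht, hdg, hM⟩ := h
  have hMdet : M.det = R.det := by rw [hM, Matrix.det_mul, hQdet, one_mul]
  obtain ⟨c, hc, hsplit⟩ := detR_split ht hdg
  have hlast : 0 < R (Fin.last (n+1)) (Fin.last (n+1)) := by nlinarith
  refine ⟨hQ, ht, fun i => ?_, hM⟩
  rcases eq_or_ne i (Fin.last (n+1)) with rfl | hi
  · exact hlast
  · have h2 := hdg (i.castPred hi)
    rwa [Fin.castSucc_castPred] at h2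

lemma qsrs_to_qr_neg {n : ℕ} {M Q R : Matrix (Fin (n+2)) (Fin (n+2)) ℝ}
    (h : IsQsRs M Q R) (hneg : M.det < 0) : IsQR M (Q * En n) (En n * R) := by
  obtain ⟨hQ, hQdet, ht, hdg, hM⟩ := h
  have hMdet : M.det = R.det := by rw [hM, Matrix.det_mul, hQdet, one_mul]
  obtain ⟨c, hc, hsplit⟩ := detR_split ht hdg
  have hlast : R (Fin.last (n+1)) (Fin.last (n+1)) < 0 := by nlinarith
  refine ⟨en_orth hQ, fun i j hij => ?_, fun i => ?_, ?_⟩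
  · rw [en_mul_apply, ht i j hij, mul_zero]
  · rw [en_mul_apply]
    rcases eq_or_ne i (Fin.last (n+1)) with rfl | hi
    · rw [if_pos rfl]; nlinarith
    · rw [if_neg hi, one_mul]
      have h2 := hdg (i.castPred hi)
      rwa [Fin.castSucc_castPred] at h2
  · rw [hM, en_prod]

lemma qr_to_qsrs_neg {n : ℕ} {M Q R : Matrix (Fin (n+2)) (Fin (n+2)) ℝ}
    (h : IsQR M Q R) (hneg : M.det < 0) : IsQsRs M (Q * En n) (En n * R) := by
  obtain ⟨hQ, ht, hdg, hM⟩ := h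
  have hR : 0 < R.det := detR_pos ht hdg
  have hMdet : M.det = Q.det * R.det := by rw [hM, Matrix.det_mul]
  have hQdet : Q.det = -1 := by
    rcases detQ_pm hQ with h1 | h1
    · exfalso; rw [h1] at hMdet; nlinarith
    · exact h1
  refine ⟨en_orth hQ, ?_, fun i j hij => ?_, fun i => ?_, ?_⟩
  · rw [Matrix.det_mul, hQdet, en_det]; norm_num
  · rw [en_mul_apply, ht i j hij, mul_zero]
  · rw [en_mul_apply, if_neg (ne_of_lt (Fin.castSucc_lt_last i)), one_mul]
    exact hdg _
  · rw [hM, en_prod]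

end AuxLemmas

theorem stmt3 (n : ℕ) (T : Matrix (Fin (n+2)) (Fin (n+2)) ℝ) (s : ℝ)
    (hT : SymTridiag T) (E : Matrix (Fin (n+2)) (Fin (n+2)) ℝ)
    (hE : ∃ d : Fin (n+2) → ℝ, (∀ i, d i = 1 ∨ d i = -1) ∧ E = Matrix.diagonal d) :
    (AlmostInv (T - s • 1) →
      AlmostInv (E * T * E - s • 1) ∧ Fs s (E * T * E) = E * Fs s T * E) ∧
    (IsUnit (T - s • (1 : Matrix (Fin (n+2)) (Fin (n+2)) ℝ)).det →
      Phi (E * T * E) s = E * Phi T s * E ∧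
      (0 < (T - s • (1 : Matrix (Fin (n+2)) (Fin (n+2)) ℝ)).det → Phi T s = Fs s T) ∧
      ((T - s • (1 : Matrix (Fin (n+2)) (Fin (n+2)) ℝ)).det < 0 →
        Phi T s = En n * Fs s T * En n)) := by
  obtain ⟨d, hd, rfl⟩ := hE
  set E := Matrix.diagonal d with hEdef
  have hEE : E * E = 1 := sign_EE hd
  have hET : Eᵀ = E := Matrix.diagonal_transpose d
  constructor
  · intro hAI
    constructor
    · rw [sign_shift hd]
      exact almostInv_conj hd hAI
    · by_cases hex : ∃ Q R, IsQsRs (T - s • 1) Q R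
      · obtain ⟨Q, R, hQR⟩ := hex
        have h2 : IsQsRs (E * T * E - s • 1) (E * Q * E) (E * R * E) := by
          rw [sign_shift hd]
          exact conjQsRs hd hQR
        rw [Fs_eq h2, Fs_eq hQR]
        exact conj_conj E Q T hET hEE
      · have hex2 : ¬ ∃ Q R, IsQsRs (E * T * E - s • 1) Q R := by
          rintro ⟨Q, R, hQR2⟩
          have h3 := conjQsRs hd hQR2
          rw [sign_shift hd, conj_cancel _ _ hEE] at h3
          exact hex ⟨_, _, h3⟩
        rw [Fs_none hex2, Fs_none hex, Matrix.mul_zero, Matrix.zero_mul]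
  · intro _
    refine ⟨?_, ?_, ?_⟩
    · by_cases hex : ∃ Q R, IsQR (T - s • 1) Q R
      · obtain ⟨Q, R, hQR⟩ := hex
        have h2 : IsQR (E * T * E - s • 1) (E * Q * E) (E * R * E) := by
          rw [sign_shift hd]
          exact conjQR hd hQR
        rw [Phi_eq h2, Phi_eq hQR]
        exact conj_conj E Q T hET hEE
      · have hex2 : ¬ ∃ Q R, IsQR (E * T * E - s • 1) Q R := by
          rintro ⟨Q, R, hQR2⟩
          have h3 := conjQR hd hQR2
          rw [sign_shift hd, conj_cancel _ _ hEE] at h3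
          exact hex ⟨_, _, h3⟩
        rw [Phi_none hex2, Phi_none hex, Matrix.mul_zero, Matrix.zero_mul]
    · intro hpos
      by_cases hex : ∃ Q R, IsQR (T - s • 1) Q R
      · obtain ⟨Q, R, hQR⟩ := hex
        rw [Phi_eq hQR, Fs_eq (qr_to_qsrs_pos hQR hpos)]
      · have hex2 : ¬ ∃ Q R, IsQsRs (T - s • 1) Q R := by
          rintro ⟨Q, R, hs⟩
          exact hex ⟨Q, R, qsrs_to_qr_pos hs hpos⟩
        rw [Phi_none hex, Fs_none hex2]
    · intro hneg
      by_cases hex : ∃ Q R, IsQR (T - s • 1) Q R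
      · obtain ⟨Q, R, hQR⟩ := hex
        rw [Phi_eq hQR, Fs_eq (qr_to_qsrs_neg hQR hneg)]
        have hmid : (Q * En n)ᵀ * T * (Q * En n) = En n * (Qᵀ * T * Q) * En n := by
          simp only [Matrix.transpose_mul, en_T, ← Matrix.mul_assoc]
        rw [hmid, conj_cancel _ _ (en_EE n)]
      · have hex2 : ¬ ∃ Q R, IsQsRs (T - s • 1) Q R := by
          rintro ⟨Q, R, hs⟩
          exact hex ⟨Q * En n, En n * R, qsrs_to_qr_neg hs hneg⟩
        rw [Phi_none hex, Fs_none hex2, Matrix.mul_zero, Matrix.zero_mul]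
end

section
/- Let T be a real symmetric tridiagonal n×n matrix (n ≥ 2) and let μ be an eigenvalue of the trailing 2×2 principal submatrix [[T_{n−1,n−1}, T_{n−1,n}], [T_{n,n−1}, T_{n,n}]] whose distance to T_{n,n} is minimal among the eigenvalues of that 2×2 submatrix (this is Wilkinson's shift ω(T)). Then |μ − T_{n,n}| ≤ √2 · |b(T)|, and there exists an eigenvalue λ of T with |μ − λ| ≤ 2√2 · |b(T)|. -/
/-!
Write `b = b(T)`, `d = T_{n,n}`, `a = T_{n-1,n-1}`. The two roots of the trailing `2×2` block are
`μ` and `a + d - μ`, with `(μ - a)(μ - d) = b²`; choosing the root nearer to `d` forces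
`|μ - d|² ≤ |μ - d| |μ - a| = b²`. For the second claim, apply the residual bound for symmetric
matrices to the last unit vector `e_n`: some eigenvalue `λ` of `T` satisfies
`|λ - μ| ≤ ‖(T - μ) e_n‖ = √(b² + (d - μ)²) ≤ √2 |b|`, since `T` is tridiagonal.
-/

open Matrix Filter Topology

attribute [local instance] Matrix.normedAddCommGroup Matrix.normedSpace

noncomputable section

attribute [local instance] Classical.propDecidable

end

open scoped InnerProductSpace

theorem OrthonormalBasis.exists_sq_sub_mul_norm_sq_le {𝕜 E ι : Type*} [RCLike 𝕜]
    [NormedAddCommGroup E] [InnerProductSpace 𝕜 E] [Fintype ι] [Nonempty ι]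
    (b : OrthonormalBasis ι 𝕜 E) {f : E →ₗ[𝕜] E} (hf : f.IsSymmetric) {ev : ι → ℝ}
    (hb : ∀ i, f (b i) = (ev i : 𝕜) • b i) (μ : ℝ) (v : E) :
    ∃ i, (ev i - μ) ^ 2 * ‖v‖ ^ 2 ≤ ‖f v - (μ : 𝕜) • v‖ ^ 2 := by
  obtain ⟨i, -, hi⟩ :=
    Finset.exists_min_image Finset.univ (fun i => (ev i - μ) ^ 2) Finset.univ_nonempty
  have hcoord (j : ι) :
      ‖⟪b j, f v - (μ : 𝕜) • v⟫_𝕜‖ ^ 2 = (ev j - μ) ^ 2 * ‖⟪b j, v⟫_𝕜‖ ^ 2 := by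
    rw [inner_sub_right, inner_smul_right, ← hf, hb, inner_smul_left, RCLike.conj_ofReal,
      ← sub_mul, ← RCLike.ofReal_sub, norm_mul, mul_pow, RCLike.norm_ofReal, sq_abs]
  refine ⟨i, ?_⟩
  calc (ev i - μ) ^ 2 * ‖v‖ ^ 2 = ∑ j, (ev i - μ) ^ 2 * ‖⟪b j, v⟫_𝕜‖ ^ 2 := by
        rw [← b.sum_sq_norm_inner_right, Finset.mul_sum]
    _ ≤ ∑ j, (ev j - μ) ^ 2 * ‖⟪b j, v⟫_𝕜‖ ^ 2 :=
        Finset.sum_le_sum fun j _ =>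
          mul_le_mul_of_nonneg_right (hi j (Finset.mem_univ j)) (by positivity)
    _ = ‖f v - (μ : 𝕜) • v‖ ^ 2 := by simp_rw [← hcoord, b.sum_sq_norm_inner_right]

theorem Matrix.IsHermitian.exists_sq_eigenvalues_sub_le {𝕜 n : Type*} [RCLike 𝕜] [Fintype n]
    [DecidableEq n] [Nonempty n] {A : Matrix n n 𝕜} (hA : A.IsHermitian) (μ : ℝ) (j : n) :
    ∃ i, (hA.eigenvalues i - μ) ^ 2 ≤ ∑ k, ‖(A - (μ : 𝕜) • 1) k j‖ ^ 2 := by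
  have heig (i : n) : toEuclideanLin A (hA.eigenvectorBasis i) =
      (hA.eigenvalues i : 𝕜) • hA.eigenvectorBasis i := by
    ext k
    have := congrFun (hA.mulVec_eigenvectorBasis i) k
    rw [Matrix.ofLp_toLpLin, Matrix.toLin'_apply, this, WithLp.ofLp_smul, Pi.smul_apply,
      Pi.smul_apply, RCLike.real_smul_eq_coe_smul (K := 𝕜)]
  obtain ⟨i, hi⟩ := hA.eigenvectorBasis.exists_sq_sub_mul_norm_sq_le
    (isSymmetric_toEuclideanLin_iff.mpr hA) heig μ (EuclideanSpace.single j 1)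
  refine ⟨i, ?_⟩
  convert hi using 1
  · simp
  · rw [EuclideanSpace.norm_sq_eq]
    congr 1 with k
    simp [Matrix.ofLp_toLpLin, Matrix.sub_apply, Matrix.one_apply, eq_comm]

theorem Matrix.isRoot_charpoly_fin_two_iff {R : Type*} [CommRing R] {a b c d x : R} :
    (!![a, b; c, d]).charpoly.IsRoot x ↔ (x - a) * (x - d) = b * c := by
  rw [Polynomial.IsRoot, Matrix.eval_charpoly, Matrix.det_fin_two, sub_eq_zero]
  simp [Matrix.sub_apply]

theorem sq_sub_le_of_isRoot_charpoly_fin_two {a b c d μ : ℝ}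
    (hμ : (!![a, b; c, d]).charpoly.IsRoot μ)
    (hmin : ∀ μ', (!![a, b; c, d]).charpoly.IsRoot μ' → |μ - d| ≤ |μ' - d|) :
    (μ - d) ^ 2 ≤ |b * c| := by
  rw [Matrix.isRoot_charpoly_fin_two_iff] at hμ
  have hother :=
    hmin (a + d - μ) (Matrix.isRoot_charpoly_fin_two_iff.mpr (by linear_combination hμ))
  rw [show a + d - μ - d = -(μ - a) by ring, abs_neg] at hother
  calc (μ - d) ^ 2 = |μ - d| * |μ - d| := by rw [sq, abs_mul_abs_self]
    _ ≤ |μ - d| * |μ - a| := by gcongr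
    _ = |b * c| := by rw [← abs_mul, ← hμ]; ring_nf

theorem SymTridiag.apply_last_eq_lowb {n : ℕ} {T : Matrix (Fin (n+2)) (Fin (n+2)) ℝ}
    (hT : SymTridiag T) : T ⟨n, by omega⟩ (Fin.last (n+1)) = lowb T :=
  congrFun (congrFun hT.1 _) _

theorem SymTridiag.sum_sq_sub_smul_one_apply_last {n : ℕ} {T : Matrix (Fin (n+2)) (Fin (n+2)) ℝ}
    (hT : SymTridiag T) (μ : ℝ) :
    ∑ k, ((T - μ • 1) k (Fin.last (n+1))) ^ 2 =
      lowb T ^ 2 + (T (Fin.last (n+1)) (Fin.last (n+1)) - μ) ^ 2 := by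
  have hlast : (⟨n, by omega⟩ : Fin (n+2)) ≠ Fin.last (n+1) := by simp [Fin.ext_iff]
  rw [Fintype.sum_eq_add _ _ hlast]
  · simp [Matrix.sub_apply, Matrix.one_apply_ne hlast, hT.apply_last_eq_lowb]
  · rintro k ⟨hkn, hkL⟩
    have hk : k.val + 1 < (Fin.last (n+1)).val := by
      simp only [ne_eq, Fin.ext_iff, Fin.val_last] at hkn hkL ⊢
      omega
    simp [Matrix.sub_apply, Matrix.one_apply_ne hkL, hT.2 k _ (Or.inl hk)]

theorem stmt4 (n : ℕ) (T : Matrix (Fin (n+2)) (Fin (n+2)) ℝ) (hT : SymTridiag T)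
    (μ : ℝ) (A : Matrix (Fin 2) (Fin 2) ℝ)
    (hA : A = !![T ⟨n, by omega⟩ ⟨n, by omega⟩, T ⟨n, by omega⟩ (Fin.last (n+1));
                 T (Fin.last (n+1)) ⟨n, by omega⟩, T (Fin.last (n+1)) (Fin.last (n+1))])
    (hμ : A.charpoly.IsRoot μ)
    (hmin : ∀ μ' : ℝ, A.charpoly.IsRoot μ' →
      |μ - T (Fin.last (n+1)) (Fin.last (n+1))| ≤ |μ' - T (Fin.last (n+1)) (Fin.last (n+1))|) :
    |μ - T (Fin.last (n+1)) (Fin.last (n+1))| ≤ Real.sqrt 2 * |lowb T| ∧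
    ∃ lam : ℝ, T.charpoly.IsRoot lam ∧ |μ - lam| ≤ 2 * Real.sqrt 2 * |lowb T| := by
  subst hA
  have hshift : (μ - T (Fin.last (n+1)) (Fin.last (n+1))) ^ 2 ≤ lowb T ^ 2 := by
    simpa [hT.apply_last_eq_lowb, lowb, abs_mul_abs_self, sq] using
      sq_sub_le_of_isRoot_charpoly_fin_two hμ hmin
  have hsqrt2 : 1 ≤ √2 := Real.one_le_sqrt.mpr one_le_two
  refine ⟨(sq_le_sq.mp hshift).trans (le_mul_of_one_le_left (abs_nonneg _) hsqrt2), ?_⟩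
  have hH : T.IsHermitian := by rw [IsHermitian, conjTranspose_eq_transpose_of_trivial, hT.1]
  obtain ⟨i, hi⟩ := hH.exists_sq_eigenvalues_sub_le μ (Fin.last (n+1))
  refine ⟨hH.eigenvalues i,
    mem_spectrum_iff_isRoot_charpoly.mp (hH.eigenvalues_mem_spectrum_real i), ?_⟩
  simp only [RCLike.ofReal_real_eq_id, id, Real.norm_eq_abs, sq_abs,
    hT.sum_sq_sub_smul_one_apply_last] at hi
  calc |μ - hH.eigenvalues i| ≤ √(2 * lowb T ^ 2) := Real.abs_le_sqrt (by nlinarith [hi, hshift])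
    _ = √2 * |lowb T| := by rw [Real.sqrt_mul zero_le_two, Real.sqrt_sq_eq_abs]
    _ ≤ 2 * √2 * |lowb T| := by gcongr; linarith
end

section
/- For every T ∈ 𝒯_Λ there exists an index i ∈ {1,…,n} with |T_{n,n} − λ_i| ≤ √2 · |b(T)|. If moreover |b(T)| < γ/(2√2), where γ := min_{i ≠ j} |λ_i − λ_j| is the spectral gap of Λ, then this index is unique. Consequently, for every ε ∈ (0, γ/(2√2)), the sets D^i_{Λ,ε} for i = 1,…,n are pairwise disjoint and their union equals {T ∈ 𝒯_Λ : |b(T)| ≤ ε}. -/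
open Matrix Filter Topology

attribute [local instance] Matrix.normedAddCommGroup Matrix.normedSpace

noncomputable section

attribute [local instance] Classical.propDecidable

end

/-! For symmetric tridiagonal `T` and the last unit vector `e`, `T e = T_{n,n} e + b(T) e_{n-1}`,
so `‖(T - T_{n,n}) e‖ = |b(T)|`. Expanding in an orthonormal eigenbasis, a self-adjoint operator
satisfies `‖(T - t) x‖ ≥ dist(t, spec T) ‖x‖`; hence some `λ_i` lies within `|b(T)|` of `T_{n,n}`.
Two eigenvalues within `√2 |b(T)|` of `T_{n,n}` are at most `2√2 |b(T)| < γ` apart, so they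
coincide. -/

open scoped InnerProductSpace

theorem LinearMap.IsSymmetric.exists_mem_spectrum_norm_sub_mul_le
    {𝕜 E : Type*} [RCLike 𝕜] [NormedAddCommGroup E] [InnerProductSpace 𝕜 E]
    [FiniteDimensional 𝕜 E] [Nontrivial E] {T : E →ₗ[𝕜] E} (hT : T.IsSymmetric) (t : 𝕜) (x : E) :
    ∃ μ ∈ spectrum 𝕜 T, ‖μ - t‖ * ‖x‖ ≤ ‖T x - t • x‖ := by
  set b := hT.eigenvectorBasis rfl
  set μ : Fin _ → 𝕜 := fun i => (hT.eigenvalues rfl i : 𝕜)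
  have : Nonempty (Fin (Module.finrank 𝕜 E)) := ⟨⟨0, Module.finrank_pos⟩⟩
  obtain ⟨i₀, hi₀⟩ := Finite.exists_min fun i => ‖μ i - t‖
  have hcoord (i) : ⟪b i, T x - t • x⟫_𝕜 = (μ i - t) * ⟪b i, x⟫_𝕜 := by
    rw [inner_sub_right, inner_smul_right, ← hT, hT.apply_eigenvectorBasis, inner_smul_left,
      RCLike.conj_ofReal, sub_mul]
  refine ⟨μ i₀, (hT.hasEigenvalue_eigenvalues rfl i₀).mem_spectrum, ?_⟩
  refine (sq_le_sq₀ (by positivity) (norm_nonneg _)).mp ?_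
  calc (‖μ i₀ - t‖ * ‖x‖) ^ 2 = ∑ i, ‖μ i₀ - t‖ ^ 2 * ‖⟪b i, x⟫_𝕜‖ ^ 2 := by
        rw [mul_pow, ← b.sum_sq_norm_inner_right x, Finset.mul_sum]
    _ ≤ ∑ i, ‖μ i - t‖ ^ 2 * ‖⟪b i, x⟫_𝕜‖ ^ 2 := by
        gcongr with i; exact hi₀ i
    _ = ‖T x - t • x‖ ^ 2 := by
        simp_rw [← b.sum_sq_norm_inner_right (T x - t • x), hcoord, norm_mul, mul_pow]

theorem Matrix.exists_eq_of_charpoly_eq_diagonal {m K : Type*} [Fintype m] [DecidableEq m]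
    [Field K] {A : Matrix m m K} {d : m → K} (h : A.charpoly = (diagonal d).charpoly) {μ : K}
    (hμ : μ ∈ spectrum K A) : ∃ i, d i = μ := by
  rwa [mem_spectrum_iff_isRoot_charpoly, h, ← mem_spectrum_iff_isRoot_charpoly,
    spectrum_diagonal] at hμ

lemma SymTridiag.toEuclideanLin_single_last_sub {n : ℕ} {T : Matrix (Fin (n+2)) (Fin (n+2)) ℝ}
    (hT : SymTridiag T) :
    toEuclideanLin T (EuclideanSpace.single (Fin.last (n+1)) 1)
        - T (Fin.last (n+1)) (Fin.last (n+1)) • EuclideanSpace.single (Fin.last (n+1)) 1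
      = EuclideanSpace.single ⟨n, by omega⟩ (lowb T) := by
  ext i
  simp only [toLpLin_apply, PiLp.sub_apply, PiLp.smul_apply, PiLp.ofLp_single,
    mulVec_single_one, PiLp.single_apply, smul_eq_mul, mul_ite, mul_one, mul_zero]
  rw [col_apply]
  by_cases hlast : i = Fin.last (n+1)
  · subst hlast
    simp [Fin.ext_iff]
  by_cases hsub : i = ⟨n, by omega⟩
  · subst hsub
    simp [hlast, lowb, ← congrFun₂ hT.1 (Fin.last (n+1)) ⟨n, by omega⟩]
  have hfar : i.val + 1 < (Fin.last (n+1)).val := by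
    simp only [Fin.ext_iff, Fin.val_last] at hlast hsub ⊢; omega
  simp [hlast, hsub, hT.2 _ _ (.inl hfar)]

theorem exists_abs_sub_le_abs_lowb {n : ℕ} {lam : Fin (n+2) → ℝ}
    {T : Matrix (Fin (n+2)) (Fin (n+2)) ℝ} (hT : T ∈ TSet lam) :
    ∃ i, |T (Fin.last (n+1)) (Fin.last (n+1)) - lam i| ≤ |lowb T| := by
  obtain ⟨htri, hcharpoly⟩ := hT
  have hT' : (toEuclideanLin T).IsSymmetric :=
    isSymmetric_toEuclideanLin_iff.mpr ((conjTranspose_eq_transpose_of_trivial T).trans htri.1)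
  obtain ⟨μ, hμ, hle⟩ := hT'.exists_mem_spectrum_norm_sub_mul_le
    (T (Fin.last (n+1)) (Fin.last (n+1))) (EuclideanSpace.single (Fin.last (n+1)) 1)
  rw [spectrum_toLpLin] at hμ
  obtain ⟨i, rfl⟩ := exists_eq_of_charpoly_eq_diagonal hcharpoly hμ
  rw [htri.toEuclideanLin_single_last_sub, PiLp.norm_single, PiLp.norm_single, norm_one, mul_one,
    Real.norm_eq_abs, Real.norm_eq_abs, abs_sub_comm] at hle
  exact ⟨i, hle⟩

theorem eq_of_abs_sub_le_of_two_mul_lt {ι : Type*} {lam : ι → ℝ} {γ : ℝ}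
    (hsep : ∀ i j, i ≠ j → γ ≤ |lam i - lam j|) {x r : ℝ} (hr : 2 * r < γ) {i j : ι}
    (hi : |x - lam i| ≤ r) (hj : |x - lam j| ≤ r) : i = j := by
  by_contra hij
  have := abs_sub_le (lam i) x (lam j)
  rw [abs_sub_comm] at hi
  linarith [hsep i j hij]

theorem stmt5_general (n : ℕ) (lam : Fin (n+2) → ℝ)
    (γ : ℝ) (hγ : IsLeast {d : ℝ | ∃ i j : Fin (n+2), i ≠ j ∧ d = |lam i - lam j|} γ) :
    (∀ T ∈ TSet lam, ∃ i : Fin (n+2),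
      |T (Fin.last (n+1)) (Fin.last (n+1)) - lam i| ≤ Real.sqrt 2 * |lowb T|) ∧
    (∀ T ∈ TSet lam, |lowb T| < γ / (2 * Real.sqrt 2) →
      ∃! i : Fin (n+2),
        |T (Fin.last (n+1)) (Fin.last (n+1)) - lam i| ≤ Real.sqrt 2 * |lowb T|) ∧
    (∀ ε : ℝ, 0 < ε → ε < γ / (2 * Real.sqrt 2) →
      (∀ i j : Fin (n+2), i ≠ j → Disjoint (Dset lam ε i) (Dset lam ε j)) ∧
      (⋃ i : Fin (n+2), Dset lam ε i) = {T ∈ TSet lam | |lowb T| ≤ ε}) := by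
  have hsqrt : 1 ≤ Real.sqrt 2 := Real.one_le_sqrt.mpr one_le_two
  have hsep (i j : Fin (n+2)) (hij : i ≠ j) : γ ≤ |lam i - lam j| := hγ.2 ⟨i, j, hij, rfl⟩
  have hgap {r : ℝ} (hr : r < γ / (2 * Real.sqrt 2)) : 2 * (Real.sqrt 2 * r) < γ := by
    rw [lt_div_iff₀ (by positivity)] at hr
    linarith
  have hclose (T) (hT : T ∈ TSet lam) : ∃ i : Fin (n+2),
      |T (Fin.last (n+1)) (Fin.last (n+1)) - lam i| ≤ Real.sqrt 2 * |lowb T| :=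
    (exists_abs_sub_le_abs_lowb hT).imp fun _ hi =>
      hi.trans (le_mul_of_one_le_left (abs_nonneg _) hsqrt)
  refine ⟨hclose, fun T hT hb => ?_, fun ε _ hε => ⟨fun i j hij => ?_, ?_⟩⟩
  · obtain ⟨i, hi⟩ := hclose T hT
    exact ⟨i, hi, fun j hj => eq_of_abs_sub_le_of_two_mul_lt hsep (hgap hb) hj hi⟩
  · exact Set.disjoint_left.mpr fun T ⟨_, _, hi⟩ ⟨_, _, hj⟩ =>
      hij (eq_of_abs_sub_le_of_two_mul_lt hsep (hgap hε) hi hj)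
  · ext T
    simp only [Set.mem_iUnion, Dset, Set.mem_ofPred_eq]
    refine ⟨fun ⟨_, hT, hb, _⟩ => ⟨hT, hb⟩, fun ⟨hT, hb⟩ => ?_⟩
    obtain ⟨i, hi⟩ := hclose T hT
    exact ⟨i, hT, hb, hi.trans (by gcongr)⟩

theorem stmt5 (n : ℕ) (lam : Fin (n+2) → ℝ) (hlam : StrictMono lam)
    (γ : ℝ) (hγ : IsLeast {d : ℝ | ∃ i j : Fin (n+2), i ≠ j ∧ d = |lam i - lam j|} γ) :
    (∀ T ∈ TSet lam, ∃ i : Fin (n+2),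
      |T (Fin.last (n+1)) (Fin.last (n+1)) - lam i| ≤ Real.sqrt 2 * |lowb T|) ∧
    (∀ T ∈ TSet lam, |lowb T| < γ / (2 * Real.sqrt 2) →
      ∃! i : Fin (n+2),
        |T (Fin.last (n+1)) (Fin.last (n+1)) - lam i| ≤ Real.sqrt 2 * |lowb T|) ∧
    (∀ ε : ℝ, 0 < ε → ε < γ / (2 * Real.sqrt 2) →
      (∀ i j : Fin (n+2), i ≠ j → Disjoint (Dset lam ε i) (Dset lam ε j)) ∧
      (⋃ i : Fin (n+2), Dset lam ε i) = {T ∈ TSet lam | |lowb T| ≤ ε}) :=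
  stmt5_general n lam γ hγ
end

section
/- Let S be a real symmetric n×n matrix with n distinct eigenvalues, and let f̃ : ℝ → ℝ be a function such that for any two eigenvalues μ < μ' of S one has |f̃(μ)| < |f̃(μ')|. Let A be the real symmetric matrix defined spectrally by A v = f̃(μ) v whenever S v = μ v (equivalently, A = U f̃(D) Uᵀ for any orthogonal diagonalization S = U D Uᵀ with D diagonal, applying f̃ entrywise to the diagonal of D). Assume A is almost invertible, let A = Q⋆R⋆ be its Q⋆R⋆ factorization, and set F := Q⋆ᵀ S Q⋆. Then for every r = 1,…,n−1, the sum of the first r diagonal entries of F is ≥ the sum of the first r diagonal entries of S; and if F_{1,1} = S_{1,1}, then S_{1,j} = 0 for all j > 1. -/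
open Matrix Filter Topology

attribute [local instance] Matrix.normedAddCommGroup Matrix.normedSpace

noncomputable section

attribute [local instance] Classical.propDecidable

end

/-!
Write `S = U D Uᵀ`, `A = U a(D) Uᵀ` with `a = f ∘ d`, and let `C` be the first `r` columns of
`Uᵀ`, so that the leading `r × r` block of `S` is `Cᵀ D C`. As `R⋆` is upper triangular with
positive leading diagonal, the first `r` columns of `A = U a(D) Uᵀ` and of `Q⋆` span the same
space, hence the leading block of `F` has trace `tr ((Cᵀ G C)⁻¹ Cᵀ G D C)` with `G = a(D)²`.
With `eₖ = (C Cᵀ)ₖₖ` and `pₖ = Gₖₖ (C (Cᵀ G C)⁻¹ Cᵀ)ₖₖ` the two traces are `∑ dₖ eₖ` and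
`∑ dₖ pₖ`, and `∑ e = ∑ p = r`, so by Abel summation it suffices that `∑ e ≤ ∑ p` on every upper
level set `T` of `d`. There `G ≥ τ` on `T` and `G ≤ τ` off `T` for some `τ > 0`, and the
inequality comes from comparing `(Cᵀ G C)⁻¹` and `(τ I)⁻¹` with `(Cᵀ min(G, τ) C)⁻¹` in the
Loewner order.
For `r = 1`, `F₁₁ = S₁₁` says that `a²` and `d` are uncorrelated under the weights `U₁ₖ²`, the
equality case of Chebyshev's sum inequality. Since `d` is injective and `a²` strictly increasing
along `d`, the weights sit on a single `k`, i.e. `e₁` is an eigenvector of `S`.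
-/

section WeightedGram

variable {ι κ : Type*}

lemma dotProduct_inv_mulVec_le_of_posSemidef_sub [Fintype κ] [DecidableEq κ]
    {G M : Matrix κ κ ℝ} (hM : M.PosDef) (hGM : (G - M).PosSemidef) (x : κ → ℝ) :
    x ⬝ᵥ G⁻¹ *ᵥ x ≤ x ⬝ᵥ M⁻¹ *ᵥ x := by
  have hG : G.PosDef := by simpa using hM.add_posSemidef hGM
  set u := G⁻¹ *ᵥ x
  set v := M⁻¹ *ᵥ x
  have hGu : G *ᵥ u = x := by
    rw [mulVec_mulVec, mul_nonsing_inv _ ((isUnit_iff_isUnit_det G).1 hG.isUnit), one_mulVec]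
  have hMv : M *ᵥ v = x := by
    rw [mulVec_mulVec, mul_nonsing_inv _ ((isUnit_iff_isUnit_det M).1 hM.isUnit), one_mulVec]
  have hMvu : v ⬝ᵥ M *ᵥ u = u ⬝ᵥ x := by
    rw [dotProduct_mulVec, ← mulVec_transpose, ← conjTranspose_eq_transpose_of_trivial,
      hM.isHermitian.eq, hMv, dotProduct_comm]
  have hMG : u ⬝ᵥ M *ᵥ u ≤ u ⬝ᵥ x := by
    have := hGM.dotProduct_mulVec_nonneg u
    simp only [star_trivial, sub_mulVec, dotProduct_sub, hGu] at this
    linarith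
  have hsq : 0 ≤ v ⬝ᵥ x - 2 * u ⬝ᵥ x + u ⬝ᵥ M *ᵥ u := by
    have := hM.posSemidef.dotProduct_mulVec_nonneg (v - u)
    simp only [star_trivial, mulVec_sub, dotProduct_sub, sub_dotProduct, hMv, hMvu] at this
    linarith
  rw [dotProduct_comm x u, dotProduct_comm x v]
  linarith

lemma weightedGram_apply [Fintype ι] [DecidableEq ι] (C : Matrix ι κ ℝ) (w : ι → ℝ) (i j : κ) :
    (Cᵀ * diagonal w * C) i j = ∑ k, w k * C k i * C k j := by
  rw [mul_apply]
  simp only [mul_diagonal, transpose_apply]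
  exact Finset.sum_congr rfl fun k _ => by ring

lemma dotProduct_mulVec_weightedGram [Fintype ι] [DecidableEq ι] [Fintype κ]
    (C : Matrix ι κ ℝ) (w : ι → ℝ) (v : κ → ℝ) :
    v ⬝ᵥ (Cᵀ * diagonal w * C) *ᵥ v = ∑ k, w k * (C *ᵥ v) k ^ 2 := by
  rw [Matrix.mul_assoc, ← mulVec_mulVec, ← mulVec_mulVec, dotProduct_mulVec, vecMul_transpose,
    dotProduct]
  simp [mulVec_diagonal, sq, mul_left_comm]

lemma posSemidef_weightedGram [Fintype ι] [DecidableEq ι] [Fintype κ] (C : Matrix ι κ ℝ)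
    {w : ι → ℝ} (hw : 0 ≤ w) : (Cᵀ * diagonal w * C).PosSemidef := by
  simpa [conjTranspose_eq_transpose_of_trivial] using
    (PosSemidef.diagonal hw).conjTranspose_mul_mul_same C

lemma posSemidef_weightedGram_sub [Fintype ι] [DecidableEq ι] [Fintype κ] (C : Matrix ι κ ℝ)
    {w w' : ι → ℝ} (h : w' ≤ w) :
    (Cᵀ * diagonal w * C - Cᵀ * diagonal w' * C).PosSemidef := by
  rw [← Matrix.sub_mul, ← Matrix.mul_sub, diagonal_sub]
  exact posSemidef_weightedGram C (sub_nonneg.2 h)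

lemma trace_mul_weightedGram [Fintype ι] [DecidableEq ι] [Fintype κ] (C : Matrix ι κ ℝ)
    (X : Matrix κ κ ℝ) (w : ι → ℝ) :
    trace (X * (Cᵀ * diagonal w * C)) = ∑ k, w k * (C * X * Cᵀ) k k := by
  rw [Matrix.mul_assoc, ← Matrix.mul_assoc, trace_mul_comm, Matrix.mul_assoc, ← Matrix.mul_assoc C]
  simp [trace, diagonal_mul]

lemma mul_mul_transpose_apply_self [Fintype κ] (C : Matrix ι κ ℝ) (X : Matrix κ κ ℝ) (k : ι) :
    (C * X * Cᵀ) k k = C k ⬝ᵥ X *ᵥ C k := by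
  rw [mul_apply', dotProduct_mulVec]
  rfl

lemma diag_mul_transpose_le_mul_diag_mul_inv_mul_transpose [Fintype κ] [DecidableEq κ]
    (C : Matrix ι κ ℝ) {M : Matrix κ κ ℝ} (hM : M.PosDef) {τ : ℝ} (hτ : 0 < τ)
    (hMτ : (τ • 1 - M).PosSemidef) (k : ι) : (C * Cᵀ) k k ≤ τ * (C * M⁻¹ * Cᵀ) k k := by
  have hτinv : (τ • (1 : Matrix κ κ ℝ))⁻¹ = τ⁻¹ • 1 :=
    inv_eq_right_inv (by simp [smul_smul, hτ.ne'])
  have := dotProduct_inv_mulVec_le_of_posSemidef_sub hM hMτ (C k)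
  rw [hτinv, smul_mulVec, dotProduct_smul, smul_eq_mul,
    ← mul_mul_transpose_apply_self, ← mul_mul_transpose_apply_self, Matrix.mul_one] at this
  rwa [← inv_mul_le_iff₀ hτ]

lemma posDef_weightedGram_min [Fintype ι] [DecidableEq ι] [Fintype κ] {C : Matrix ι κ ℝ}
    {g : ι → ℝ} (hg : 0 ≤ g) (hG : (Cᵀ * diagonal g * C).PosDef) {τ : ℝ} (hτ : 0 < τ) :
    (Cᵀ * diagonal (fun k => min (g k) τ) * C).PosDef := by
  refine .of_dotProduct_mulVec_pos
    (posSemidef_weightedGram C fun k => le_min (hg k) hτ.le).isHermitian fun v hv => ?_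
  have hGv := hG.dotProduct_mulVec_pos hv
  simp only [star_trivial, dotProduct_mulVec_weightedGram] at hGv ⊢
  obtain ⟨k, -, hk⟩ := Finset.exists_lt_of_sum_lt (f := fun _ => (0 : ℝ)) (by simpa using hGv)
  refine Finset.sum_pos' (fun k _ => mul_nonneg (le_min (hg k) hτ.le) (sq_nonneg _))
    ⟨k, Finset.mem_univ k, ?_⟩
  have hgk : 0 < g k := pos_of_mul_pos_left hk (sq_nonneg _)
  exact mul_pos (lt_min hgk hτ) (pos_of_mul_pos_right hk hgk.le)

lemma sum_mul_diag_mul_inv_mul_transpose [Fintype ι] [DecidableEq ι] [Fintype κ]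
    [DecidableEq κ] (C : Matrix ι κ ℝ) (w : ι → ℝ) (hw : IsUnit (Cᵀ * diagonal w * C).det) :
    ∑ k, w k * (C * (Cᵀ * diagonal w * C)⁻¹ * Cᵀ) k k = Fintype.card κ := by
  rw [← trace_mul_weightedGram, nonsing_inv_mul _ hw, trace_one]

lemma sum_diag_mul_transpose [Fintype ι] [Fintype κ] [DecidableEq κ] {C : Matrix ι κ ℝ}
    (hC : Cᵀ * C = 1) : ∑ k, (C * Cᵀ) k k = Fintype.card κ := by
  change trace (C * Cᵀ) = _
  rw [trace_mul_comm, hC, trace_one]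

end WeightedGram

lemma mul_sum_le_sum_mul_of_sum_filter_lt_nonneg {ι : Type*} (d x : ι → ℝ) (s : Finset ι)
    (hx : ∀ t, 0 ≤ ∑ k ∈ s with t < d k, x k) {c : ℝ} (hc : ∀ k ∈ s, c ≤ d k) :
    c * ∑ k ∈ s, x k ≤ ∑ k ∈ s, d k * x k := by
  induction s using Finset.strongInduction generalizing c with
  | H s ih =>
  rcases s.eq_empty_or_nonempty with rfl | hs
  · simp
  obtain ⟨k₀, hk₀, hmin⟩ := s.exists_min_image d hs
  set s' := s.filter (fun k => d k₀ < d k)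
  have hs' : s' ⊂ s := Finset.filter_ssubset.2 ⟨k₀, hk₀, lt_irrefl _⟩
  have hx' : ∀ t, 0 ≤ ∑ k ∈ s' with t < d k, x k := fun t => by
    convert hx (max t (d k₀)) using 2
    rw [Finset.filter_filter]
    exact Finset.filter_congr fun k _ => by rw [max_lt_iff, and_comm]
  have hIH := ih s' hs' hx' fun k hk => (Finset.mem_filter.1 hk).2.le
  have hrest : ∑ k ∈ s with ¬ d k₀ < d k, d k * x k
      = d k₀ * ∑ k ∈ s with ¬ d k₀ < d k, x k := by
    rw [Finset.mul_sum]
    refine Finset.sum_congr rfl fun k hk => ?_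
    obtain ⟨hks, hk⟩ := Finset.mem_filter.1 hk
    rw [le_antisymm (not_lt.1 hk) (hmin k hks)]
  have hsum : 0 ≤ ∑ k ∈ s, x k := by
    simpa [Finset.filter_true_of_mem fun k hk => (sub_one_lt c).trans_le (hc k hk)]
      using hx (c - 1)
  calc c * ∑ k ∈ s, x k
      ≤ d k₀ * ∑ k ∈ s, x k := mul_le_mul_of_nonneg_right (hc k₀ hk₀) hsum
    _ = d k₀ * ∑ k ∈ s', x k + d k₀ * ∑ k ∈ s with ¬ d k₀ < d k, x k := by
      rw [← Finset.sum_filter_add_sum_filter_not s (fun k => d k₀ < d k), mul_add]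
    _ ≤ ∑ k ∈ s, d k * x k := by
      rw [← Finset.sum_filter_add_sum_filter_not s (fun k => d k₀ < d k), hrest]
      linarith

section TraceInequality

variable {ι κ : Type*} [Fintype ι] [DecidableEq ι] [Fintype κ] [DecidableEq κ]

lemma sum_diag_mul_transpose_le_of_threshold {C : Matrix ι κ ℝ} (hC : Cᵀ * C = 1)
    {g : ι → ℝ} (hg : 0 ≤ g) (hG : (Cᵀ * diagonal g * C).PosDef) {T : Finset ι} {τ : ℝ}
    (hτ : 0 < τ) (hT : ∀ k ∈ T, τ ≤ g k) (hTc : ∀ k ∉ T, g k ≤ τ) :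
    ∑ k ∈ T, (C * Cᵀ) k k ≤ ∑ k ∈ T, g k * (C * (Cᵀ * diagonal g * C)⁻¹ * Cᵀ) k k := by
  set G := Cᵀ * diagonal g * C
  set m : ι → ℝ := fun k => min (g k) τ
  set M := Cᵀ * diagonal m * C
  have hM : M.PosDef := posDef_weightedGram_min hg hG hτ
  set q : ι → ℝ := fun k => (C * M⁻¹ * Cᵀ) k k
  have hpq : ∀ k, (C * G⁻¹ * Cᵀ) k k ≤ q k := fun k => by
    simp only [q, mul_mul_transpose_apply_self]
    exact dotProduct_inv_mulVec_le_of_posSemidef_sub hM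
      (posSemidef_weightedGram_sub C fun k => min_le_left _ _) _
  have hMτ : (τ • 1 - M).PosSemidef := by
    have hτ1 : τ • (1 : Matrix κ κ ℝ) = Cᵀ * diagonal (fun _ : ι => τ) * C := by
      rw [← smul_one_eq_diagonal]
      simp [hC]
    rw [hτ1]
    exact posSemidef_weightedGram_sub C fun k => min_le_right _ _
  have heq : ∀ k, (C * Cᵀ) k k ≤ τ * q k :=
    diag_mul_transpose_le_mul_diag_mul_inv_mul_transpose C hM hτ hMτ
  have hMsum := sum_mul_diag_mul_inv_mul_transpose C m
    ((isUnit_iff_isUnit_det M).1 hM.isUnit)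
  have hGsum := sum_mul_diag_mul_inv_mul_transpose C g
    ((isUnit_iff_isUnit_det G).1 hG.isUnit)
  rw [← Finset.sum_add_sum_compl T] at hMsum hGsum
  have hmT : ∑ k ∈ T, m k * q k = τ * ∑ k ∈ T, q k := by
    rw [Finset.mul_sum]
    exact Finset.sum_congr rfl fun k hk => by simp only [m, min_eq_right (hT k hk)]
  have hmTc : ∑ k ∈ Tᶜ, m k * q k = ∑ k ∈ Tᶜ, g k * q k :=
    Finset.sum_congr rfl fun k hk => by simp only [m, min_eq_left (hTc k (Finset.mem_compl.1 hk))]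
  have h1 : ∑ k ∈ T, (C * Cᵀ) k k ≤ τ * ∑ k ∈ T, q k := by
    rw [Finset.mul_sum]
    exact Finset.sum_le_sum fun k _ => heq k
  have h2 : ∑ k ∈ Tᶜ, g k * (C * G⁻¹ * Cᵀ) k k ≤ ∑ k ∈ Tᶜ, g k * q k :=
    Finset.sum_le_sum fun k _ => mul_le_mul_of_nonneg_left (hpq k) (hg k)
  linarith

lemma sum_filter_diag_mul_transpose_le {C : Matrix ι κ ℝ} (hC : Cᵀ * C = 1) {g d : ι → ℝ}
    (hg : 0 ≤ g) (hG : (Cᵀ * diagonal g * C).PosDef) (hgd : ∀ k l, d k < d l → g k < g l)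
    (t : ℝ) :
    ∑ k with t < d k, (C * Cᵀ) k k ≤
      ∑ k with t < d k, g k * (C * (Cᵀ * diagonal g * C)⁻¹ * Cᵀ) k k := by
  set T : Finset ι := {k | t < d k}
  by_cases hTu : ∀ l, t < d l
  · have hT : T = Finset.univ := Finset.filter_true_of_mem fun l _ => hTu l
    rw [hT, sum_diag_mul_transpose hC,
      sum_mul_diag_mul_inv_mul_transpose C g ((isUnit_iff_isUnit_det _).1 hG.isUnit)]
  obtain ⟨l₀, hl₀⟩ : ∃ l, d l ≤ t := by simpa using hTu
  rcases T.eq_empty_or_nonempty with hT | hT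
  · rw [hT, Finset.sum_empty, Finset.sum_empty]
  obtain ⟨k₁, hk₁, hmin⟩ := T.exists_min_image g hT
  have hlt : ∀ l ∉ T, ∀ k ∈ T, g l < g k := fun l hl k hk => hgd l k <|
    (not_lt.1 fun h => hl (Finset.mem_filter.2 ⟨Finset.mem_univ l, h⟩)).trans_lt
      (Finset.mem_filter.1 hk).2
  have hl₀T : l₀ ∉ T := fun h => (Finset.mem_filter.1 h).2.not_ge hl₀
  exact sum_diag_mul_transpose_le_of_threshold hC hg hG
    ((hg l₀).trans_lt (hlt l₀ hl₀T k₁ hk₁)) hmin fun l hl => (hlt l hl k₁ hk₁).le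

theorem trace_weightedGram_le_trace_inv_mul_weightedGram {C : Matrix ι κ ℝ} (hC : Cᵀ * C = 1)
    {g d : ι → ℝ} (hg : 0 ≤ g) (hG : (Cᵀ * diagonal g * C).PosDef)
    (hgd : ∀ k l, d k < d l → g k < g l) :
    trace (Cᵀ * diagonal d * C) ≤
      trace ((Cᵀ * diagonal g * C)⁻¹ * (Cᵀ * diagonal (g * d) * C)) := by
  set e : ι → ℝ := fun k => (C * Cᵀ) k k
  set p : ι → ℝ := fun k => g k * (C * (Cᵀ * diagonal g * C)⁻¹ * Cᵀ) k k
  have hL : trace (Cᵀ * diagonal d * C) = ∑ k, d k * e k := by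
    simpa using trace_mul_weightedGram C 1 d
  have hR : trace ((Cᵀ * diagonal g * C)⁻¹ * (Cᵀ * diagonal (g * d) * C))
      = ∑ k, d k * p k := by
    rw [trace_mul_weightedGram]
    exact Finset.sum_congr rfl fun k _ => by simp only [p, Pi.mul_apply]; ring
  have hsum : ∑ k, (p k - e k) = 0 := by
    rw [Finset.sum_sub_distrib, sum_diag_mul_transpose hC,
      sum_mul_diag_mul_inv_mul_transpose C g ((isUnit_iff_isUnit_det _).1 hG.isUnit), sub_self]
  obtain ⟨c, hc⟩ := (Set.finite_range d).bddBelow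
  have key := mul_sum_le_sum_mul_of_sum_filter_lt_nonneg d (p - e) Finset.univ
    (fun t => by
      simpa [Finset.sum_sub_distrib] using sum_filter_diag_mul_transpose_le hC hg hG hgd t)
    (fun k _ => hc ⟨k, rfl⟩)
  simp only [Pi.sub_apply, hsum, mul_zero, mul_sub, Finset.sum_sub_distrib, sub_nonneg] at key
  rw [hL, hR]
  exact key

end TraceInequality

section Chebyshev

variable {ι : Type*} [Fintype ι]

lemma sum_sum_mul_sub_mul_sub (p g d : ι → ℝ) :
    ∑ k, ∑ l, p k * p l * ((g k - g l) * (d k - d l)) =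
      2 * ((∑ k, p k) * ∑ k, p k * g k * d k - (∑ k, p k * g k) * ∑ k, p k * d k) := by
  have hterm : ∀ k l, p k * p l * ((g k - g l) * (d k - d l)) =
      p k * g k * d k * p l + p k * (p l * g l * d l) - p k * g k * (p l * d l)
        - p k * d k * (p l * g l) := fun k l => by ring
  simp only [hterm, Finset.sum_add_distrib, Finset.sum_sub_distrib, ← Finset.sum_mul_sum]
  ring

lemma mul_eq_zero_of_sum_mul_sum_eq {p g d : ι → ℝ} (hp : 0 ≤ p)
    (hgd : ∀ k l, d k < d l → g k < g l) (hd : Function.Injective d)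
    (h : (∑ k, p k) * ∑ k, p k * g k * d k = (∑ k, p k * g k) * ∑ k, p k * d k) {k l : ι}
    (hkl : k ≠ l) : p k * p l = 0 := by
  have hcov : ∀ k l, 0 ≤ (g k - g l) * (d k - d l) := fun k l => by
    rcases lt_trichotomy (d k) (d l) with h | h | h
    · exact mul_nonneg_of_nonpos_of_nonpos (sub_nonpos.2 (hgd k l h).le) (sub_nonpos.2 h.le)
    · simp [h]
    · exact mul_nonneg (sub_nonneg.2 (hgd l k h).le) (sub_nonneg.2 h.le)
  have hterm : ∀ k l, 0 ≤ p k * p l * ((g k - g l) * (d k - d l)) := fun k l =>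
    mul_nonneg (mul_nonneg (hp k) (hp l)) (hcov k l)
  have hzero : p k * p l * ((g k - g l) * (d k - d l)) = 0 := by
    have htot := sum_sum_mul_sub_mul_sub p g d
    rw [h, sub_self, mul_zero, Finset.sum_eq_zero_iff_of_nonneg fun k _ =>
      Finset.sum_nonneg fun l _ => hterm k l] at htot
    exact (Finset.sum_eq_zero_iff_of_nonneg fun l _ => hterm k l).1
      (htot k (Finset.mem_univ k)) l (Finset.mem_univ l)
  refine (mul_eq_zero.1 hzero).resolve_right (ne_of_gt ?_)
  rcases (hd.ne hkl).lt_or_gt with h | h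
  · exact mul_pos_of_neg_of_neg (sub_neg.2 (hgd k l h)) (sub_neg.2 h)
  · exact mul_pos (sub_pos.2 (hgd l k h)) (sub_pos.2 h)

variable [DecidableEq ι]

lemma mul_diagonal_mul_transpose_apply_eq_zero {U : Matrix ι ι ℝ} (hU : U * Uᵀ = 1)
    (d : ι → ℝ) {i : ι} (hrow : ∀ k l, k ≠ l → U i k * U i l = 0) {j : ι} (hji : j ≠ i) :
    (U * diagonal d * Uᵀ) i j = 0 := by
  obtain ⟨k₀, hk₀⟩ : ∃ k₀, U i k₀ ≠ 0 := by
    by_contra! h0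
    simpa [mul_apply, h0] using congrFun (congrFun hU i) i
  have hsupp : ∀ k, k ≠ k₀ → U i k = 0 := fun k hk =>
    (mul_eq_zero.1 (hrow k₀ k (Ne.symm hk))).resolve_left hk₀
  have horth : U i k₀ * U j k₀ = 0 := by
    have := congrFun (congrFun hU i) j
    rwa [mul_apply, Finset.sum_eq_single k₀ (fun k _ hk => by simp [hsupp k hk]) (by simp),
      one_apply_ne hji.symm, transpose_apply] at this
  rw [mul_apply, Finset.sum_eq_single k₀ (fun k _ hk => by simp [mul_diagonal, hsupp k hk])
    (by simp)]
  simp only [mul_diagonal, transpose_apply]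
  linear_combination d k₀ * horth

lemma mul_diagonal_mul_transpose_apply_eq_zero_of_sum_mul_sum_eq {U : Matrix ι ι ℝ}
    (hU : U * Uᵀ = 1) {g d : ι → ℝ} (hgd : ∀ k l, d k < d l → g k < g l)
    (hd : Function.Injective d) {i : ι}
    (h : (∑ k, g k * U i k * U i k) * (∑ k, d k * U i k * U i k) =
      ∑ k, g k * d k * U i k * U i k) {j : ι} (hji : j ≠ i) :
    (U * diagonal d * Uᵀ) i j = 0 := by
  have hnorm : ∑ k, U i k * U i k = 1 := by
    simpa [mul_apply] using congrFun (congrFun hU i) i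
  refine mul_diagonal_mul_transpose_apply_eq_zero hU d (fun k l hkl => ?_) hji
  have := mul_eq_zero_of_sum_mul_sum_eq (p := fun k => U i k * U i k)
    (fun k => mul_self_nonneg _) hgd hd ?_ hkl
  · exact mul_self_eq_zero.1 (by linear_combination this)
  simp only [hnorm, one_mul]
  simp only [mul_comm, mul_left_comm] at h ⊢
  exact h.symm

end Chebyshev

lemma Fin.sum_filter_val_lt_eq_sum_castLE {M : Type*} [AddCommMonoid M] {N r : ℕ} (h : r ≤ N)
    (f : Fin N → M) : ∑ i : Fin N with i.val < r, f i = ∑ j : Fin r, f (Fin.castLE h j) := by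
  refine Eq.trans ?_ (Finset.sum_map Finset.univ (Fin.castLEEmb h) f)
  congr 1
  ext i
  simpa using ⟨fun hi => ⟨⟨i, hi⟩, rfl⟩, fun ⟨j, hj⟩ => hj ▸ j.isLt⟩

section LeadingBlock

variable {ι : Type*} {N r : ℕ} (h : r ≤ N)

lemma trace_submatrix_castLE (X : Matrix (Fin N) (Fin N) ℝ) :
    trace (X.submatrix (Fin.castLE h) (Fin.castLE h)) = ∑ i : Fin N with i.val < r, X i i :=
  (Fin.sum_filter_val_lt_eq_sum_castLE h fun i => X i i).symm

lemma submatrix_castLE_mul_of_isUpperTriangular (Q : Matrix ι (Fin N) ℝ)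
    {R : Matrix (Fin N) (Fin N) ℝ} (hR : R.IsUpperTriangular) :
    (Q * R).submatrix id (Fin.castLE h) =
      Q.submatrix id (Fin.castLE h) * R.submatrix (Fin.castLE h) (Fin.castLE h) := by
  ext i j
  refine (Finset.sum_filter_of_ne fun k _ hk => ?_).symm.trans
    (Fin.sum_filter_val_lt_eq_sum_castLE h _)
  by_contra hkr
  exact hk (mul_eq_zero_of_right _ (hR (show Fin.castLE h j < k from
    Fin.lt_def.2 (lt_of_lt_of_le j.isLt (not_lt.1 hkr)))))

lemma isUnit_submatrix_castLE_of_isUpperTriangular {R : Matrix (Fin N) (Fin N) ℝ}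
    (hR : R.IsUpperTriangular) (hdiag : ∀ i : Fin N, i.val < r → 0 < R i i) :
    IsUnit (R.submatrix (Fin.castLE h) (Fin.castLE h)) := by
  rw [isUnit_iff_isUnit_det, det_of_isUpperTriangular
    (M := R.submatrix (Fin.castLE h) (Fin.castLE h)) fun i j hij => hR hij]
  exact (Finset.prod_pos fun j _ => hdiag _ j.isLt).ne'.isUnit

lemma submatrix_castLE_transpose_mul_mul (P S : Matrix (Fin N) (Fin N) ℝ) :
    (Pᵀ * S * P).submatrix (Fin.castLE h) (Fin.castLE h) =
      (P.submatrix id (Fin.castLE h))ᵀ * S * P.submatrix id (Fin.castLE h) := by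
  rw [submatrix_mul _ _ _ id _ Function.bijective_id, submatrix_mul _ _ _ id _
    Function.bijective_id, transpose_submatrix, submatrix_id_id]

lemma submatrix_castLE_mul_mul_transpose (P S : Matrix (Fin N) (Fin N) ℝ) :
    (P * S * Pᵀ).submatrix (Fin.castLE h) (Fin.castLE h) =
      (Pᵀ.submatrix id (Fin.castLE h))ᵀ * S * Pᵀ.submatrix id (Fin.castLE h) := by
  simpa using submatrix_castLE_transpose_mul_mul h Pᵀ S

lemma transpose_mul_self_submatrix_castLE {P : Matrix (Fin N) (Fin N) ℝ} (hP : Pᵀ * P = 1) :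
    (P.submatrix id (Fin.castLE h))ᵀ * P.submatrix id (Fin.castLE h) = 1 := by
  simpa [hP, submatrix_one _ (Fin.castLE_injective h)] using
    (submatrix_castLE_transpose_mul_mul h P 1).symm

end LeadingBlock

section Compression

variable {ι κ : Type*} [Fintype ι] [Fintype κ] [DecidableEq κ]

lemma posDef_transpose_mul_self_of_eq_mul {V W : Matrix ι κ ℝ} {B : Matrix κ κ ℝ}
    (hV : Vᵀ * V = 1) (hB : IsUnit B) (hW : W = V * B) : (Wᵀ * W).PosDef := by
  have hWW : Wᵀ * W = Bᴴ * B := by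
    rw [hW, transpose_mul, Matrix.mul_assoc, ← Matrix.mul_assoc Vᵀ, hV, Matrix.one_mul,
      conjTranspose_eq_transpose_of_trivial]
  rw [hWW]
  exact PosDef.conjTranspose_mul_self B (mulVec_injective_iff_isUnit.2 hB)

lemma trace_transpose_mul_mul_eq_of_eq_mul {V W : Matrix ι κ ℝ} {B : Matrix κ κ ℝ}
    (hV : Vᵀ * V = 1) (hB : IsUnit B) (hW : W = V * B) (S : Matrix ι ι ℝ) :
    trace (Vᵀ * S * V) = trace ((Wᵀ * W)⁻¹ * (Wᵀ * S * W)) := by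
  have hBdet := (isUnit_iff_isUnit_det B).1 hB
  have hBtdet : IsUnit Bᵀ.det := by rwa [det_transpose]
  have hWW : (Wᵀ * W)⁻¹ = B⁻¹ * Bᵀ⁻¹ := by
    rw [hW, transpose_mul, Matrix.mul_assoc, ← Matrix.mul_assoc Vᵀ, hV, Matrix.one_mul,
      Matrix.mul_inv_rev]
  rw [hWW, hW, transpose_mul]
  calc trace (Vᵀ * S * V)
      = trace (B⁻¹ * (Vᵀ * S * V) * B) := by
        rw [trace_mul_cycle B⁻¹, mul_nonsing_inv _ hBdet, Matrix.one_mul]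
    _ = trace (B⁻¹ * Bᵀ⁻¹ * (Bᵀ * Vᵀ * S * (V * B))) := by
        simp only [Matrix.mul_assoc, nonsing_inv_mul_cancel_left _ _ hBtdet]

end Compression

section Spectral

variable {ι κ : Type*} [Fintype ι] [DecidableEq ι]

lemma mul_diagonal_mul_transpose_mul {U : Matrix ι ι ℝ} (hU : Uᵀ * U = 1) (a b : ι → ℝ)
    (C : Matrix ι κ ℝ) :
    U * diagonal a * Uᵀ * (U * diagonal b * C) = U * diagonal (a * b) * C := by
  simp only [Matrix.mul_assoc]
  rw [← Matrix.mul_assoc Uᵀ, hU, Matrix.one_mul, ← Matrix.mul_assoc (diagonal a),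
    diagonal_mul_diagonal]
  rfl

lemma transpose_mul_diagonal_mul {U : Matrix ι ι ℝ} (hU : Uᵀ * U = 1) (a b : ι → ℝ)
    (C : Matrix ι κ ℝ) :
    (U * diagonal a * C)ᵀ * (U * diagonal b * C) = Cᵀ * diagonal (a * b) * C := by
  simp only [transpose_mul, diagonal_transpose, Matrix.mul_assoc]
  rw [← Matrix.mul_assoc Uᵀ, hU, Matrix.one_mul, ← Matrix.mul_assoc (diagonal a),
    diagonal_mul_diagonal]
  rfl

end Spectral

theorem posDef_and_trace_submatrix_castLE_conj_eq {N r : ℕ} (h : r ≤ N)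
    {U Q R : Matrix (Fin N) (Fin N) ℝ} {C : Matrix (Fin N) (Fin r) ℝ} {a d : Fin N → ℝ}
    (hU : Uᵀ * U = 1) (hQ : Qᵀ * Q = 1) (hR : R.IsUpperTriangular)
    (hdiag : ∀ i : Fin N, i.val < r → 0 < R i i)
    (hQR : U * diagonal a * Uᵀ = Q * R) (hC : C = Uᵀ.submatrix id (Fin.castLE h)) :
    (Cᵀ * diagonal (a * a) * C).PosDef ∧
      trace ((Qᵀ * (U * diagonal d * Uᵀ) * Q).submatrix (Fin.castLE h) (Fin.castLE h)) =
        trace ((Cᵀ * diagonal (a * a) * C)⁻¹ * (Cᵀ * diagonal (a * a * d) * C)) := by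
  set W := (Q * R).submatrix id (Fin.castLE h)
  have hWU : W = U * diagonal a * C := by
    simp only [W]
    rw [← hQR, hC, submatrix_mul _ _ _ id _ Function.bijective_id, submatrix_id_id]
  have hWQ : W = Q.submatrix id (Fin.castLE h) * R.submatrix (Fin.castLE h) (Fin.castLE h) :=
    submatrix_castLE_mul_of_isUpperTriangular h Q hR
  have hQ' := transpose_mul_self_submatrix_castLE h hQ
  have hB := isUnit_submatrix_castLE_of_isUpperTriangular h hR hdiag
  have hWW : Wᵀ * W = Cᵀ * diagonal (a * a) * C := by
    rw [hWU, transpose_mul_diagonal_mul hU]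
  have hWSW : Wᵀ * (U * diagonal d * Uᵀ) * W = Cᵀ * diagonal (a * a * d) * C := by
    rw [Matrix.mul_assoc, hWU, mul_diagonal_mul_transpose_mul hU, transpose_mul_diagonal_mul hU]
    congr 3
    ring
  refine ⟨hWW ▸ posDef_transpose_mul_self_of_eq_mul hQ' hB hWQ, ?_⟩
  rw [submatrix_castLE_transpose_mul_mul, ← hWW, ← hWSW]
  exact trace_transpose_mul_mul_eq_of_eq_mul hQ' hB hWQ _

lemma mul_eq_of_trace_inv_mul_eq_fin_one {G H : Matrix (Fin 1) (Fin 1) ℝ} (hG : IsUnit G)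
    {x : ℝ} (hx : trace (G⁻¹ * H) = x) : G 0 0 * x = H 0 0 := by
  have := congrFun (congrFun
    (mul_nonsing_inv_cancel_left (A := G) H ((isUnit_iff_isUnit_det G).1 hG)) 0) 0
  rwa [mul_apply, Fin.sum_univ_one, ← trace_fin_one (G⁻¹ * H), hx] at this

theorem stmt19_general (n : ℕ) (S : Matrix (Fin (n+2)) (Fin (n+2)) ℝ)
    (U : Matrix (Fin (n+2)) (Fin (n+2)) ℝ) (d : Fin (n+2) → ℝ)
    (hU : Uᵀ * U = 1) (hd : Function.Injective d)
    (hS : S = U * Matrix.diagonal d * Uᵀ)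
    (f : ℝ → ℝ) (hf : ∀ i j : Fin (n+2), d i < d j → |f (d i)| < |f (d j)|)
    (A : Matrix (Fin (n+2)) (Fin (n+2)) ℝ)
    (hA : A = U * Matrix.diagonal (fun i => f (d i)) * Uᵀ)
    (Q R : Matrix (Fin (n+2)) (Fin (n+2)) ℝ) (hQR : IsQsRs A Q R) :
    (∀ r : ℕ, 1 ≤ r → r ≤ n + 1 →
      ∑ i ∈ Finset.univ.filter (fun i : Fin (n+2) => i.val < r), S i i ≤
        ∑ i ∈ Finset.univ.filter (fun i : Fin (n+2) => i.val < r), (Qᵀ * S * Q) i i) ∧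
    ((Qᵀ * S * Q) 0 0 = S 0 0 → ∀ j : Fin (n+2), j ≠ 0 → S 0 j = 0) := by
  obtain ⟨hQ, -, hR, hRpos, hAQR⟩ := hQR
  set a : Fin (n+2) → ℝ := fun i => f (d i)
  have hgd : ∀ k l, d k < d l → (a * a) k < (a * a) l := fun k l hkl => by
    simpa only [Pi.mul_apply, abs_mul_abs_self] using
      mul_self_lt_mul_self (abs_nonneg _) (hf k l hkl)
  have hUt : U * Uᵀ = 1 := mul_eq_one_comm.mp hU
  have hstep : ∀ {r} (h : r ≤ n + 1), _ := fun {r} h =>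
    posDef_and_trace_submatrix_castLE_conj_eq (show r ≤ n + 2 by omega) (d := d) hU hQ hR
      (fun ⟨i, _⟩ hi => hRpos ⟨i, hi.trans_le h⟩) (hA ▸ hAQR) rfl
  subst hS
  refine ⟨fun r _ hr => ?_, fun h00 j hj => ?_⟩
  · obtain ⟨hG, htr⟩ := hstep hr
    have hr' : r ≤ n + 2 := by omega
    rw [← trace_submatrix_castLE hr', ← trace_submatrix_castLE hr', htr,
      submatrix_castLE_mul_mul_transpose]
    exact trace_weightedGram_le_trace_inv_mul_weightedGram
      (transpose_mul_self_submatrix_castLE hr' (by rwa [transpose_transpose]))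
      (fun k => mul_self_nonneg _) hG hgd
  · obtain ⟨hG, htr⟩ := hstep (r := 1) (by omega)
    have hGH := mul_eq_of_trace_inv_mul_eq_fin_one hG.isUnit htr.symm
    have h0 : Fin.castLE (show 1 ≤ n + 2 by omega) 0 = 0 := rfl
    have hS00 := congrFun (congrFun
      (submatrix_castLE_mul_mul_transpose (show 1 ≤ n + 2 by omega) U (diagonal d)) 0) 0
    rw [trace_fin_one] at hGH
    simp only [submatrix_apply, h0] at hS00
    simp only [submatrix_apply, h0, h00, hS00, weightedGram_apply] at hGH
    exact mul_diagonal_mul_transpose_apply_eq_zero_of_sum_mul_sum_eq hUt hgd hd hGH hj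

theorem stmt19 (n : ℕ) (S : Matrix (Fin (n+2)) (Fin (n+2)) ℝ)
    (U : Matrix (Fin (n+2)) (Fin (n+2)) ℝ) (d : Fin (n+2) → ℝ)
    (hU : Uᵀ * U = 1) (hd : Function.Injective d)
    (hS : S = U * Matrix.diagonal d * Uᵀ)
    (f : ℝ → ℝ) (hf : ∀ i j : Fin (n+2), d i < d j → |f (d i)| < |f (d j)|)
    (A : Matrix (Fin (n+2)) (Fin (n+2)) ℝ)
    (hA : A = U * Matrix.diagonal (fun i => f (d i)) * Uᵀ)
    (hAi : AlmostInv A)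
    (Q R : Matrix (Fin (n+2)) (Fin (n+2)) ℝ) (hQR : IsQsRs A Q R) :
    (∀ r : ℕ, 1 ≤ r → r ≤ n + 1 →
      ∑ i ∈ Finset.univ.filter (fun i : Fin (n+2) => i.val < r), S i i ≤
        ∑ i ∈ Finset.univ.filter (fun i : Fin (n+2) => i.val < r), (Qᵀ * S * Q) i i) ∧
    ((Qᵀ * S * Q) 0 0 = S 0 0 → ∀ j : Fin (n+2), j ≠ 0 → S 0 j = 0) :=
  stmt19_general n S U d hU hd hS f hf A hA Q R hQR
end
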